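/- arXiv:1411.0425 — 9 statements merged into one kernel-verified Lean document; each statement's English description precedes it below -/
import Mathlib

section
/- Let X be a subspace of a Banach space Y. If X is locally 1-complemented in Y (for every ε > 0 and finite dimensional E ⊂ Y there exists T : E → X with Te = e for e ∈ E ∩ X and ‖T‖ ≤ 1 + ε), then there exists a Hahn-Banach extension operator φ : X* → Y*. -/
open TopologicalSpace Metric

open Filter Topology

set_option maxHeartbeats 1000000 in
theorem locally_one_complemented_implies_hahn_banach_extension_operator
    (Y : Type*) [NormedAddCommGroup Y] [NormedSpace ℝ Y] [CompleteSpace Y]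
    (X : Subspace ℝ Y) (hX : IsClosed (X : Set Y))
    (hloc : ∀ ε : ℝ, 0 < ε → ∀ E : Subspace ℝ Y, FiniteDimensional ℝ E →
      ∃ T : E →L[ℝ] X, (∀ e : E, (e : Y) ∈ X → ((T e : Y) = (e : Y))) ∧ ‖T‖ ≤ 1 + ε) :
    ∃ φ : (X →L[ℝ] ℝ) →ₗ[ℝ] (Y →L[ℝ] ℝ),
      (∀ (f : X →L[ℝ] ℝ) (x : X), φ f (x : Y) = f x) ∧
      (∀ f : X →L[ℝ] ℝ, ‖φ f‖ = ‖f‖) := by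
  classical
  -- index type: finite dimensional subspaces × ℕ
  haveI hS1 : Nonempty {E : Subspace ℝ Y // FiniteDimensional ℝ E} :=
    ⟨⟨⊥, inferInstance⟩⟩
  haveI hS2 : IsDirected {E : Subspace ℝ Y // FiniteDimensional ℝ E} (· ≤ ·) :=
    ⟨fun a b => by
      haveI := a.2; haveI := b.2
      exact ⟨⟨a.1 ⊔ b.1, Submodule.finiteDimensional_sup a.1 b.1⟩, Subtype.coe_le_coe.mp le_sup_left, Subtype.coe_le_coe.mp le_sup_right⟩⟩
  haveI hS3 : IsDirected ({E : Subspace ℝ Y // FiniteDimensional ℝ E} × ℕ) (· ≤ ·) :=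
    ⟨fun a b => by
      obtain ⟨c, hc1, hc2⟩ := hS2.directed a.1 b.1
      exact ⟨(c, max a.2 b.2), ⟨hc1, le_max_left _ _⟩, ⟨hc2, le_max_right _ _⟩⟩⟩
  -- choose the operators
  have hT : ∀ i : {E : Subspace ℝ Y // FiniteDimensional ℝ E} × ℕ,
      ∃ T : i.1.1 →L[ℝ] X, (∀ e : i.1.1, (e : Y) ∈ X → ((T e : Y) = (e : Y))) ∧
        ‖T‖ ≤ 1 + 1 / (i.2 + 1) :=
    fun i => hloc _ (by positivity) i.1.1 i.1.2
  choose T hTid hTnorm using hT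
  -- ultrafilter
  haveI : (atTop : Filter ({E : Subspace ℝ Y // FiniteDimensional ℝ E} × ℕ)).NeBot :=
    atTop_neBot
  set U : Ultrafilter ({E : Subspace ℝ Y // FiniteDimensional ℝ E} × ℕ) :=
    Ultrafilter.of atTop with hU
  have hUle : (U : Filter ({E : Subspace ℝ Y // FiniteDimensional ℝ E} × ℕ)) ≤ atTop := by rw [hU]; exact Ultrafilter.of_le _
  -- the approximating functionals
  set h : (X →L[ℝ] ℝ) → Y → ({E : Subspace ℝ Y // FiniteDimensional ℝ E} × ℕ) → ℝ :=
    fun f y i => if hy : y ∈ i.1.1 then f (T i ⟨y, hy⟩) else 0 with hh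
  -- uniform bound
  have hbound : ∀ (f : X →L[ℝ] ℝ) (y : Y) i, |h f y i| ≤ (1 + 1 / (i.2 + 1)) * (‖f‖ * ‖y‖) := by
    intro f y i
    simp only [hh]
    split_ifs with hy
    · calc |f (T i ⟨y, hy⟩)| ≤ ‖f‖ * ‖T i ⟨y, hy⟩‖ := f.le_opNorm _
        _ ≤ ‖f‖ * (‖T i‖ * ‖(⟨y, hy⟩ : i.1.1)‖) :=
          mul_le_mul_of_nonneg_left ((T i).le_opNorm _) (norm_nonneg f)
        _ = ‖T i‖ * (‖f‖ * ‖y‖) := by rw [show ‖(⟨y, hy⟩ : i.1.1)‖ = ‖y‖ from rfl]; ring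
        _ ≤ (1 + 1 / (i.2 + 1)) * (‖f‖ * ‖y‖) := by
          apply mul_le_mul_of_nonneg_right (hTnorm i) (by positivity)
    · simp; positivity
  have hbound2 : ∀ (f : X →L[ℝ] ℝ) (y : Y) i, |h f y i| ≤ 2 * (‖f‖ * ‖y‖) := by
    intro f y i
    refine (hbound f y i).trans (mul_le_mul_of_nonneg_right ?_ (by positivity))
    have : (1 : ℝ) / (i.2 + 1) ≤ 1 := by
      rw [div_le_one (by positivity)]; linarith [Nat.cast_nonneg (α := ℝ) i.2]
    linarith
  -- existence of limits
  have hex : ∀ (f : X →L[ℝ] ℝ) (y : Y), ∃ a, Tendsto (h f y) (U : Filter ({E : Subspace ℝ Y // FiniteDimensional ℝ E} × ℕ)) (𝓝 a) := by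
    intro f y
    have hc : IsCompact (Set.Icc (-(2 * (‖f‖ * ‖y‖))) (2 * (‖f‖ * ‖y‖))) := isCompact_Icc
    obtain ⟨a, _, ha⟩ := hc.ultrafilter_le_nhds (U.map (h f y)) (by
      rw [Ultrafilter.coe_map, Filter.le_principal_iff, Filter.mem_map]
      refine Filter.univ_mem' fun i => ?_
      have := hbound2 f y i
      rw [abs_le] at this
      exact ⟨by linarith [this.1], this.2⟩)
    exact ⟨a, ha⟩
  set L : (X →L[ℝ] ℝ) → Y → ℝ := fun f y => lim ((U : Filter ({E : Subspace ℝ Y // FiniteDimensional ℝ E} × ℕ)).map (h f y)) with hL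
  have htend : ∀ (f : X →L[ℝ] ℝ) (y : Y), Tendsto (h f y) (U : Filter ({E : Subspace ℝ Y // FiniteDimensional ℝ E} × ℕ)) (𝓝 (L f y)) :=
    fun f y => le_nhds_lim (hex f y)
  -- eventual membership
  have hmem : ∀ y : Y, ∀ᶠ i in (U : Filter ({E : Subspace ℝ Y // FiniteDimensional ℝ E} × ℕ)), y ∈ i.1.1 := by
    intro y
    refine hUle ?_
    have : Set.Ici ((⟨⟨Submodule.span ℝ {y}, inferInstance⟩, 0⟩ :
        {E : Subspace ℝ Y // FiniteDimensional ℝ E} × ℕ)) ∈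
        (atTop : Filter ({E : Subspace ℝ Y // FiniteDimensional ℝ E} × ℕ)) := Ici_mem_atTop _
    refine Filter.mem_of_superset this fun i hi => ?_
    have h1 : Submodule.span ℝ {y} ≤ i.1.1 := hi.1
    exact h1 (Submodule.mem_span_singleton_self y)
  -- eventual value on X
  have hval : ∀ (f : X →L[ℝ] ℝ) (x : X), h f (x : Y) =ᶠ[(U : Filter ({E : Subspace ℝ Y // FiniteDimensional ℝ E} × ℕ))] fun _ => f x := by
    intro f x
    filter_upwards [hmem (x : Y)] with i hi
    simp only [hh]
    rw [dif_pos hi]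
    congr 1
    have := hTid i ⟨(x : Y), hi⟩ x.2
    exact Subtype.ext this
  have hLval : ∀ (f : X →L[ℝ] ℝ) (x : X), L f (x : Y) = f x := by
    intro f x
    exact tendsto_nhds_unique (Filter.Tendsto.congr' (hval f x) (htend f (x : Y))) tendsto_const_nhds
  -- additivity in y
  have hLaddy : ∀ (f : X →L[ℝ] ℝ) (y z : Y), L f (y + z) = L f y + L f z := by
    intro f y z
    have hev : h f (y + z) =ᶠ[(U : Filter ({E : Subspace ℝ Y // FiniteDimensional ℝ E} × ℕ))] fun i => h f y i + h f z i := by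
      filter_upwards [hmem y, hmem z] with i hy hz
      have hyz : y + z ∈ i.1.1 := add_mem hy hz
      simp only [hh]
      rw [dif_pos hy, dif_pos hz, dif_pos hyz]
      have : (⟨y + z, hyz⟩ : i.1.1) = ⟨y, hy⟩ + ⟨z, hz⟩ := rfl
      rw [this, map_add, map_add]
    exact tendsto_nhds_unique (htend f (y + z))
      (Filter.Tendsto.congr' hev.symm ((htend f y).add (htend f z)))
  -- smul in y
  have hLsmuly : ∀ (f : X →L[ℝ] ℝ) (c : ℝ) (y : Y), L f (c • y) = c * L f y := by
    intro f c y
    have hev : h f (c • y) =ᶠ[(U : Filter ({E : Subspace ℝ Y // FiniteDimensional ℝ E} × ℕ))] fun i => c * h f y i := by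
      filter_upwards [hmem y] with i hy
      have hcy : c • y ∈ i.1.1 := Submodule.smul_mem _ _ hy
      simp only [hh]
      rw [dif_pos hy, dif_pos hcy]
      have : (⟨c • y, hcy⟩ : i.1.1) = c • ⟨y, hy⟩ := rfl
      rw [this, map_smul, map_smul]
      simp
    exact tendsto_nhds_unique (htend f (c • y))
      (Filter.Tendsto.congr' hev.symm ((htend f y).const_mul c))
  -- linearity in f
  have hLaddf : ∀ (f g : X →L[ℝ] ℝ) (y : Y), L (f + g) y = L f y + L g y := by
    intro f g y
    have hev : h (f + g) y = fun i => h f y i + h g y i := by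
      funext i
      simp only [hh]
      split_ifs with hy
      · simp
      · simp
    exact tendsto_nhds_unique (hev ▸ htend (f + g) y) ((htend f y).add (htend g y))
  have hLsmulf : ∀ (c : ℝ) (f : X →L[ℝ] ℝ) (y : Y), L (c • f) y = c * L f y := by
    intro c f y
    have hev : h (c • f) y = fun i => c * h f y i := by
      funext i
      simp only [hh]
      split_ifs with hy
      · simp
      · simp
    exact tendsto_nhds_unique (hev ▸ htend (c • f) y) ((htend f y).const_mul c)
  -- norm bound
  have hLbound : ∀ (f : X →L[ℝ] ℝ) (y : Y), |L f y| ≤ ‖f‖ * ‖y‖ := by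
    intro f y
    refine le_of_forall_pos_le_add fun ε hε => ?_
    set c := ‖f‖ * ‖y‖ with hc
    have hc0 : 0 ≤ c := by positivity
    obtain ⟨N, hN⟩ := exists_nat_one_div_lt (ε := ε / (c + 1)) (by positivity)
    have hev : ∀ᶠ i in (U : Filter ({E : Subspace ℝ Y // FiniteDimensional ℝ E} × ℕ)), |h f y i| ≤ c + ε := by
      refine hUle ?_
      have hIci : Set.Ici ((⟨⟨⊥, inferInstance⟩, N⟩ :
          {E : Subspace ℝ Y // FiniteDimensional ℝ E} × ℕ)) ∈
          (atTop : Filter ({E : Subspace ℝ Y // FiniteDimensional ℝ E} × ℕ)) := Ici_mem_atTop _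
      refine Filter.mem_of_superset hIci fun i hi => ?_
      have hn : (N : ℕ) ≤ i.2 := hi.2
      have hn' : (N : ℝ) + 1 ≤ (i.2 : ℝ) + 1 := by
        have : (N : ℝ) ≤ (i.2 : ℝ) := Nat.cast_le.mpr hn
        linarith
      have h1 : (1 : ℝ) / (i.2 + 1) ≤ 1 / (N + 1) :=
        one_div_le_one_div_of_le (by positivity) hn'
      have h2 : (1 : ℝ) / (i.2 + 1) ≤ ε / (c + 1) := le_of_lt (lt_of_le_of_lt h1 hN)
      calc |h f y i| ≤ (1 + 1 / (i.2 + 1)) * c := hbound f y i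
        _ ≤ (1 + ε / (c + 1)) * c :=
          mul_le_mul_of_nonneg_right (by linarith) hc0
        _ = c + (ε / (c + 1)) * c := by ring
        _ ≤ c + ε := by
          have : (ε / (c + 1)) * c ≤ ε := by
            rw [div_mul_eq_mul_div, div_le_iff₀ (by positivity)]
            nlinarith
          linarith
    exact le_of_tendsto (htend f y).abs hev
  -- build the continuous linear maps
  set φ0 : (X →L[ℝ] ℝ) → (Y →L[ℝ] ℝ) := fun f =>
    LinearMap.mkContinuous
      { toFun := L f
        map_add' := hLaddy f
        map_smul' := fun c y => hLsmuly f c y }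
      ‖f‖ (fun y => by rw [Real.norm_eq_abs]; exact hLbound f y) with hφ0
  have hφ0apply : ∀ (f : X →L[ℝ] ℝ) (y : Y), φ0 f y = L f y := fun f y => rfl
  refine ⟨{ toFun := φ0
            map_add' := fun f g => ContinuousLinearMap.ext fun y => by
              simp only [hφ0apply, ContinuousLinearMap.add_apply]
              exact hLaddf f g y
            map_smul' := fun c f => ContinuousLinearMap.ext fun y => by
              simp only [hφ0apply, ContinuousLinearMap.coe_smul', Pi.smul_apply,
                RingHom.id_apply, smul_eq_mul]
              exact hLsmulf c f y }, ?_, ?_⟩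
  · intro f x
    exact hLval f x
  · intro f
    refine le_antisymm ?_ ?_
    · exact LinearMap.mkContinuous_norm_le _ (norm_nonneg f)
        (fun y => by rw [Real.norm_eq_abs]; exact hLbound f y)
    · refine f.opNorm_le_bound (norm_nonneg _) fun x => ?_
      have : f x = φ0 f (x : Y) := (hLval f x).symm
      rw [this]
      calc |φ0 f (x : Y)| ≤ ‖φ0 f‖ * ‖(x : Y)‖ := (φ0 f).le_opNorm _
        _ = ‖φ0 f‖ * ‖x‖ := rfl
end

section
/- Let Y be a Banach space, B a finite dimensional subspace of Y, k ∈ ℕ, ε > 0, and C a finite subset of Y*. Then there exists a finite dimensional subspace Z of Y containing B such that for every subspace E of Y with B ⊆ E and dim(E/B) ≤ k, there is a linear operator T : E → Z satisfying: (i) Ty = y for all y ∈ B; (ii) (1−ε)‖y‖ ≤ ‖Ty‖ ≤ (1+ε)‖y‖ for all y ∈ E; (iii) |f(Ty) − f(y)| ≤ ε‖y‖ for all y ∈ E and f ∈ C. -/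
/-!
Choose unit vectors e₁, …, e_j ∈ E inductively by Riesz's lemma, each at distance at least 1/2
from the span of B and the previous ones. Then the coefficients of b + ∑ tᵢ eᵢ are bounded by
3^j times its norm, so (b, t) ↦ b + ∑ tᵢ eᵢ is an isomorphism B × ℝʲ ≃ E whose inverse has norm
bounded in terms of j alone. Up to an error that is small relative to ‖(b, t)‖, the quantities in
(ii) and (iii) only depend on the norms of such a map at the points of a finite net of the unit ball
of B × ℝʲ and on its compositions with the functionals in C; these data lie in a bounded subset of a
finite-dimensional space. By total boundedness finitely many tuples z approximate every admissible
tuple e, and T(b + ∑ tᵢ eᵢ) = b + ∑ tᵢ zᵢ works for Z spanned by B and all these zᵢ, with one such Z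
for each j ≤ k.
-/

open TopologicalSpace Metric

theorem Submodule.finiteDimensional_and_exists_finrank_eq_of_rank_quotient_le
    {K V : Type*} [DivisionRing K] [AddCommGroup V] [Module K V] (N : Submodule K V)
    [FiniteDimensional K N] {k : ℕ} (h : Module.rank K (V ⧸ N) ≤ k) :
    FiniteDimensional K V ∧ ∃ j ≤ k, Module.finrank K V = Module.finrank K N + j := by
  have : FiniteDimensional K (V ⧸ N) :=
    Module.rank_lt_aleph0_iff.mp (h.trans_lt Cardinal.natCast_lt_aleph0)
  have : FiniteDimensional K V := Module.Finite.of_submodule_quotient N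
  exact ⟨this, _, Module.finrank_le_of_rank_le h,
    (finrank_quotient_add_finrank N).symm.trans (add_comm _ _)⟩

theorem Submodule.finiteDimensional_and_exists_finrank_eq_of_rank_quotient_comap_le
    {K V : Type*} [DivisionRing K] [AddCommGroup V] [Module K V] {B E : Submodule K V}
    [FiniteDimensional K B] (hBE : B ≤ E) {k : ℕ} (h : Module.rank K (E ⧸ B.comap E.subtype) ≤ k) :
    FiniteDimensional K E ∧ ∃ j ≤ k, Module.finrank K E = Module.finrank K B + j := by
  have e := comapSubtypeEquivOfLe hBE
  have : FiniteDimensional K (B.comap E.subtype) := e.symm.finiteDimensional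
  rw [← e.finrank_eq]
  exact finiteDimensional_and_exists_finrank_eq_of_rank_quotient_le _ h

section

open Submodule

variable {P Y : Type*} [NormedAddCommGroup P] [NormedSpace ℝ P]
  [NormedAddCommGroup Y] [NormedSpace ℝ Y]

namespace ContinuousLinearMap

theorem abs_norm_sub_norm_le_of_closedBall {L L' : P →L[ℝ] Y} {δ : ℝ}
    (h : ∀ p, ‖p‖ ≤ 1 → |‖L p‖ - ‖L' p‖| ≤ δ) (p : P) :
    |‖L p‖ - ‖L' p‖| ≤ δ * ‖p‖ := by
  rcases eq_or_ne p 0 with rfl | hp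
  · simp
  have hp : 0 < ‖p‖ := norm_pos_iff.mpr hp
  have := h (‖p‖⁻¹ • p) (by rw [norm_smul, norm_inv, norm_norm, inv_mul_cancel₀ hp.ne'])
  rwa [map_smul, map_smul, norm_smul, norm_smul, ← mul_sub, abs_mul, norm_inv, norm_norm,
    abs_inv, abs_norm, inv_mul_le_iff₀ hp, mul_comm] at this

theorem abs_norm_sub_norm_le_of_norm_sub_le {L L' : P →L[ℝ] Y} {R η : ℝ} (hL : ‖L‖ ≤ R)
    (hL' : ‖L'‖ ≤ R) {p q : P} (hpq : ‖p - q‖ ≤ η) (hq : |‖L q‖ - ‖L' q‖| ≤ η) :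
    |‖L p‖ - ‖L' p‖| ≤ (2 * R + 1) * η := by
  have lip : ∀ M : P →L[ℝ] Y, ‖M‖ ≤ R → |‖M p‖ - ‖M q‖| ≤ R * η := fun M hM =>
    calc |‖M p‖ - ‖M q‖| ≤ ‖M (p - q)‖ := by rw [map_sub]; exact abs_norm_sub_norm_le _ _
      _ ≤ ‖M‖ * ‖p - q‖ := M.le_opNorm _
      _ ≤ R * η := mul_le_mul hM hpq (norm_nonneg _) ((norm_nonneg L).trans hL)
  calc |‖L p‖ - ‖L' p‖| ≤ |‖L p‖ - ‖L q‖| + |‖L q‖ - ‖L' q‖| + |‖L' q‖ - ‖L' p‖| :=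
        (abs_sub_le _ (‖L' q‖) _).trans (add_le_add_left (abs_sub_le _ (‖L q‖) _) _)
    _ ≤ R * η + η + R * η := by
        gcongr
        exacts [lip L hL, by rw [abs_sub_comm]; exact lip L' hL']
    _ = (2 * R + 1) * η := by ring

noncomputable def probe (N : Set P) [Fintype N] (C : Finset (Y →L[ℝ] ℝ)) (L : P →L[ℝ] Y) :
    (N → ℝ) × (C → P →L[ℝ] ℝ) :=
  (fun q => ‖L q‖, fun f => (f : Y →L[ℝ] ℝ).comp L)

theorem isBounded_image_probe {N : Set P} [Fintype N] (hN : N ⊆ closedBall 0 1)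
    (C : Finset (Y →L[ℝ] ℝ)) {S : Set (P →L[ℝ] Y)} (hS : Bornology.IsBounded S) :
    Bornology.IsBounded (probe N C '' S) := by
  obtain ⟨R, hR, hSR⟩ := hS.exists_pos_norm_le
  set M := 1 + ∑ f ∈ C, ‖f‖
  have hM : 1 ≤ M := le_add_of_nonneg_right (by positivity)
  refine isBounded_iff_forall_norm_le.mpr ⟨M * R, ?_⟩
  rintro _ ⟨L, hL, rfl⟩
  refine norm_prod_le_iff.mpr ⟨(pi_norm_le_iff_of_nonneg (by positivity)).mpr fun q => ?_,
    (pi_norm_le_iff_of_nonneg (by positivity)).mpr fun f => ?_⟩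
  · calc ‖‖L q‖‖ = ‖L q‖ := norm_norm _
      _ ≤ ‖L‖ * ‖(q : P)‖ := L.le_opNorm q
      _ ≤ R * 1 :=
        mul_le_mul (hSR L hL) (mem_closedBall_zero_iff.mp (hN q.2)) (norm_nonneg _) hR.le
      _ ≤ M * R := by nlinarith
  · calc ‖(f : Y →L[ℝ] ℝ).comp L‖ ≤ ‖(f : Y →L[ℝ] ℝ)‖ * ‖L‖ := opNorm_comp_le _ _
      _ ≤ M * R := mul_le_mul ((Finset.single_le_sum (fun g _ => norm_nonneg g) f.2).trans
          (le_add_of_nonneg_left zero_le_one)) (hSR L hL) (norm_nonneg _) (by positivity)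

theorem exists_finset_approx [FiniteDimensional ℝ P]
    {S : Set (P →L[ℝ] Y)} (hS : Bornology.IsBounded S) (C : Finset (Y →L[ℝ] ℝ))
    {δ : ℝ} (hδ : 0 < δ) :
    ∃ F : Finset (P →L[ℝ] Y), ↑F ⊆ S ∧ ∀ L ∈ S, ∃ L' ∈ F, ∀ p,
      |‖L p‖ - ‖L' p‖| ≤ δ * ‖p‖ ∧ ∀ f ∈ C, |f (L p) - f (L' p)| ≤ δ * ‖p‖ := by
  obtain ⟨R, hR, hSR⟩ := hS.exists_pos_norm_le
  set η := δ / (2 * R + 1)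
  have hη : 0 < η := by positivity
  obtain ⟨N, hN1, hNfin, hNcov⟩ :=
    finite_cover_balls_of_compact (isCompact_closedBall (0 : P) 1) hη
  have := hNfin.fintype
  obtain ⟨F, hFS, hFfin, hFcov⟩ := Set.exists_subset_image_finite_and.mp
    (finite_approx_of_totallyBounded
      ((isBounded_image_probe hN1 C hS).isCompact_closure.totallyBounded.subset subset_closure)
      η hη)
  refine ⟨hFfin.toFinset, by simpa using hFS, fun L hL => ?_⟩
  obtain ⟨_, ⟨L', hL'F, rfl⟩, hLL'⟩ := Set.mem_iUnion₂.mp (hFcov ⟨L, hL, rfl⟩)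
  obtain ⟨hnorms, hcomps⟩ := max_lt_iff.mp (show dist (probe N C L) (probe N C L') < η from hLL')
  refine ⟨L', hFfin.mem_toFinset.mpr hL'F, fun p => ⟨?_, fun f hf => ?_⟩⟩
  · refine abs_norm_sub_norm_le_of_closedBall (fun p hp => ?_) p
    obtain ⟨q, hqN, hpq⟩ := Set.mem_iUnion₂.mp (hNcov (mem_closedBall_zero_iff.mpr hp))
    have hq : |‖L q‖ - ‖L' q‖| ≤ η :=
      (dist_le_pi_dist (probe N C L).1 (probe N C L').1 ⟨q, hqN⟩).trans hnorms.le
    calc |‖L p‖ - ‖L' p‖| ≤ (2 * R + 1) * η :=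
          abs_norm_sub_norm_le_of_norm_sub_le (hSR L hL) (hSR L' (hFS hL'F))
            (mem_ball_iff_norm.mp hpq).le hq
      _ = δ := by simp only [η]; field_simp
  · calc |f (L p) - f (L' p)| = ‖((f : Y →L[ℝ] ℝ).comp L - (f : Y →L[ℝ] ℝ).comp L') p‖ := rfl
      _ ≤ ‖(f : Y →L[ℝ] ℝ).comp L - (f : Y →L[ℝ] ℝ).comp L'‖ * ‖p‖ := le_opNorm _ _
      _ ≤ δ * ‖p‖ := by
          gcongr
          calc _ = dist ((probe N C L).2 ⟨f, hf⟩) ((probe N C L').2 ⟨f, hf⟩) :=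
                (dist_eq_norm _ _).symm
            _ ≤ η := (dist_le_pi_dist _ _ _).trans hcomps.le
            _ ≤ δ := div_le_self hδ.le (by linarith)

end ContinuousLinearMap

theorem exists_norm_eq_one_le_norm_sub {H E : Subspace ℝ Y} [FiniteDimensional ℝ H]
    (hHE : H ≤ E) (hEH : ¬ E ≤ H) : ∃ u ∈ E, ‖u‖ = 1 ∧ ∀ y ∈ H, 1 / 2 ≤ ‖u - y‖ := by
  have : FiniteDimensional ℝ (H.comap E.subtype) :=
    (comapSubtypeEquivOfLe hHE).symm.finiteDimensional
  obtain ⟨v, hvE, hvH⟩ := SetLike.not_le_iff_exists.mp hEH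
  obtain ⟨u, -, hu1, hu⟩ := riesz_lemma_of_lt_one (F := H.comap E.subtype)
    (closed_of_finiteDimensional _) ⟨⟨v, hvE⟩, hvH⟩ (r := 1 / 2) (by norm_num)
  exact ⟨u, u.2, hu1, fun y hy => hu ⟨y, hHE hy⟩ hy⟩

theorem abs_le_and_norm_le_of_le_norm_sub {H : Subspace ℝ Y} {u w : Y} (hu : ‖u‖ = 1)
    (hfar : ∀ y ∈ H, 1 / 2 ≤ ‖u - y‖) (hw : w ∈ H) (s : ℝ) :
    |s| ≤ 2 * ‖w + s • u‖ ∧ ‖w‖ ≤ 3 * ‖w + s • u‖ := by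
  have hs : |s| ≤ 2 * ‖w + s • u‖ := by
    rcases eq_or_ne s 0 with rfl | hs
    · simp
    have hfactor : w + s • u = s • (u - (-s⁻¹) • w) := by
      rw [smul_sub, smul_smul, mul_neg, mul_inv_cancel₀ hs]; module
    have := hfar _ (H.smul_mem (-s⁻¹) hw)
    rw [hfactor, norm_smul, Real.norm_eq_abs]
    nlinarith [abs_nonneg s]
  refine ⟨hs, ?_⟩
  calc ‖w‖ = ‖(w + s • u) - s • u‖ := by rw [add_sub_cancel_right]
    _ ≤ ‖w + s • u‖ + ‖s • u‖ := norm_sub_le _ _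
    _ = ‖w + s • u‖ + |s| := by rw [norm_smul, hu, Real.norm_eq_abs, mul_one]
    _ ≤ 3 * ‖w + s • u‖ := by linarith

theorem exists_tuple_abs_le_mul_norm (B E : Subspace ℝ Y) [FiniteDimensional ℝ B] (hBE : B ≤ E) :
    ∀ j : ℕ, Module.finrank ℝ B + j ≤ Module.finrank ℝ E → ∃ e : Fin j → Y,
      (∀ i, e i ∈ E) ∧ (∀ i, ‖e i‖ = 1) ∧
      ∀ b ∈ B, ∀ (t : Fin j → ℝ) (i : Fin j), |t i| ≤ 3 ^ j * ‖b + ∑ i, t i • e i‖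
  | 0, _ => ⟨Fin.elim0, fun i => i.elim0, fun i => i.elim0, fun _ _ _ i => i.elim0⟩
  | j + 1, hj => by
    obtain ⟨e, heE, he1, he⟩ := exists_tuple_abs_le_mul_norm B E hBE j (by omega)
    have : FiniteDimensional ℝ (span ℝ (Set.range e)) :=
      FiniteDimensional.span_of_finite ℝ (Set.finite_range e)
    set H := B ⊔ span ℝ (Set.range e)
    have hHE : H ≤ E := sup_le hBE (span_le.mpr (Set.range_subset_iff.mpr heE))
    have hEH : ¬ E ≤ H := fun hle => by
      have := finrank_mono hle
      have : Module.finrank ℝ H ≤ _ := finrank_add_le_finrank_add_finrank B (span ℝ (Set.range e))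
      have : Module.finrank ℝ (span ℝ (Set.range e)) ≤ j :=
        (finrank_range_le_card (R := ℝ) e).trans_eq (Fintype.card_fin j)
      omega
    obtain ⟨u, huE, hu1, hfar⟩ := exists_norm_eq_one_le_norm_sub hHE hEH
    refine ⟨Fin.snoc e u, Fin.lastCases (by simpa) (by simpa), Fin.lastCases (by simpa) (by simpa),
      fun b hb t => ?_⟩
    set w := b + ∑ i, t i.castSucc • e i
    have hw : w ∈ H := add_mem (mem_sup_left hb) (sum_mem fun i _ =>
      smul_mem _ _ (mem_sup_right (subset_span (Set.mem_range_self i))))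
    obtain ⟨hlast, hw3⟩ := abs_le_and_norm_le_of_le_norm_sub hu1 hfar hw (t (Fin.last j))
    have hsum : b + ∑ i, t i • Fin.snoc e u i = w + t (Fin.last j) • u := by
      simp [w, Fin.sum_univ_castSucc, add_assoc]
    rw [hsum]
    refine Fin.lastCases (hlast.trans ?_) fun i => ?_
    · gcongr
      calc (2 : ℝ) ≤ 3 ^ 1 := by norm_num
        _ ≤ 3 ^ (j + 1) := pow_le_pow_right₀ (by norm_num) (by omega)
    · calc |t i.castSucc| ≤ 3 ^ j * ‖w‖ := he b hb (fun i => t i.castSucc) i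
        _ ≤ 3 ^ j * (3 * ‖w + t (Fin.last j) • u‖) := by gcongr
        _ = 3 ^ (j + 1) * ‖w + t (Fin.last j) • u‖ := by ring

section AdjoinTuple

variable (B : Subspace ℝ Y) {j : ℕ}

noncomputable def adjoinTuple (e : Fin j → Y) : B × (Fin j → ℝ) →L[ℝ] Y :=
  B.subtypeL.coprod (∑ i, (ContinuousLinearMap.proj i).smulRight (e i))

@[simp]
theorem adjoinTuple_apply (e : Fin j → Y) (p : B × (Fin j → ℝ)) :
    adjoinTuple B e p = p.1 + ∑ i, p.2 i • e i := by
  simp [adjoinTuple]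

variable {B} {e : Fin j → Y}

theorem norm_sum_smul_le (he : ∀ i, ‖e i‖ ≤ 1) (t : Fin j → ℝ) :
    ‖∑ i, t i • e i‖ ≤ j * ‖t‖ :=
  calc ‖∑ i, t i • e i‖ ≤ ∑ i, ‖t i • e i‖ := norm_sum_le _ _
    _ ≤ ∑ _i : Fin j, ‖t‖ := Finset.sum_le_sum fun i _ => by
        rw [norm_smul]
        exact mul_le_of_le_one_right (norm_nonneg _) (he i) |>.trans (norm_le_pi_norm t i)
    _ = j * ‖t‖ := by simp

theorem norm_adjoinTuple_le (he : ∀ i, ‖e i‖ ≤ 1) : ‖adjoinTuple B e‖ ≤ 1 + j :=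
  ContinuousLinearMap.opNorm_le_bound _ (by positivity) fun p =>
    calc ‖adjoinTuple B e p‖ ≤ ‖p.1‖ + j * ‖p.2‖ := by
          rw [adjoinTuple_apply]
          exact (norm_add_le _ _).trans (add_le_add le_rfl (norm_sum_smul_le he p.2))
      _ ≤ ‖p‖ + j * ‖p‖ := by gcongr; exacts [norm_fst_le p, norm_snd_le p]
      _ = (1 + j) * ‖p‖ := by ring

theorem norm_le_mul_norm_adjoinTuple (he : ∀ i, ‖e i‖ ≤ 1) {c : ℝ} (hc : 0 ≤ c)
    (hcoeff : ∀ b ∈ B, ∀ (t : Fin j → ℝ) (i : Fin j), |t i| ≤ c * ‖b + ∑ i, t i • e i‖)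
    (p : B × (Fin j → ℝ)) : ‖p‖ ≤ (1 + j) * (1 + c) * ‖adjoinTuple B e p‖ := by
  set x := adjoinTuple B e p with hx
  have ht : ‖p.2‖ ≤ c * ‖x‖ := (pi_norm_le_iff_of_nonneg (by positivity)).mpr fun i => by
    rw [Real.norm_eq_abs, hx, adjoinTuple_apply]
    exact hcoeff _ p.1.2 p.2 i
  have hj : (0 : ℝ) ≤ j := j.cast_nonneg
  refine norm_prod_le_iff.mpr
    ⟨?_, ht.trans (by nlinarith [norm_nonneg x, mul_nonneg (mul_nonneg hj hc) (norm_nonneg x)])⟩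
  calc ‖p.1‖ = ‖x - ∑ i, p.2 i • e i‖ := by simp [hx]
    _ ≤ ‖x‖ + j * (c * ‖x‖) := (norm_sub_le _ _).trans
        (by gcongr; exact (norm_sum_smul_le he p.2).trans (by gcongr))
    _ ≤ (1 + j) * (1 + c) * ‖x‖ := by nlinarith [norm_nonneg x, mul_nonneg hc (norm_nonneg x)]

end AdjoinTuple

def IsApproxEmbedding (B : Subspace ℝ Y) (C : Finset (Y →L[ℝ] ℝ)) (ε : ℝ) {E Z : Subspace ℝ Y}
    (T : E →ₗ[ℝ] Z) : Prop :=
  (∀ e : E, (e : Y) ∈ B → ((T e : Y) = (e : Y))) ∧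
    (∀ e : E, (1 - ε) * ‖(e : Y)‖ ≤ ‖(T e : Y)‖ ∧ ‖(T e : Y)‖ ≤ (1 + ε) * ‖(e : Y)‖) ∧
    (∀ e : E, ∀ f ∈ C, |f ((T e : Y)) - f ((e : Y))| ≤ ε * ‖(e : Y)‖)

theorem IsApproxEmbedding.inclusion_comp {B : Subspace ℝ Y} {C : Finset (Y →L[ℝ] ℝ)} {ε : ℝ}
    {E Z Z' : Subspace ℝ Y} {T : E →ₗ[ℝ] Z} (hT : IsApproxEmbedding B C ε T) (hZ : Z ≤ Z') :
    IsApproxEmbedding B C ε ((inclusion hZ).comp T) :=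
  hT

theorem isApproxEmbedding_comp_symm {B E Z : Subspace ℝ Y} {C : Finset (Y →L[ℝ] ℝ)} {ε : ℝ}
    {L L' : P →L[ℝ] Y} (Φ : P ≃ₗ[ℝ] E) (hΦ : ∀ p, (Φ p : Y) = L p)
    (hB : ∀ x : E, (x : Y) ∈ B → L' (Φ.symm x) = x) (hZ : ∀ p, L' p ∈ Z)
    (hnorm : ∀ p, |‖L p‖ - ‖L' p‖| ≤ ε * ‖L p‖)
    (hcomp : ∀ p, ∀ f ∈ C, |f (L p) - f (L' p)| ≤ ε * ‖L p‖) :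
    IsApproxEmbedding B C ε (L'.toLinearMap.codRestrict Z hZ ∘ₗ Φ.symm.toLinearMap) := by
  have hΦ' : ∀ x : E, L (Φ.symm x) = x := fun x => by rw [← hΦ, Φ.apply_symm_apply]
  refine ⟨hB, fun x => ?_, fun x f hf => ?_⟩
  · show (1 - ε) * ‖(x : Y)‖ ≤ ‖L' (Φ.symm x)‖ ∧ ‖L' (Φ.symm x)‖ ≤ (1 + ε) * ‖(x : Y)‖
    have := hnorm (Φ.symm x)
    rw [hΦ'] at this
    constructor <;> linarith [abs_le.mp this]
  · show |f (L' (Φ.symm x)) - f x| ≤ ε * ‖(x : Y)‖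
    rw [abs_sub_comm, ← hΦ']
    exact hcomp _ f hf

theorem exists_subspace_isApproxEmbedding_of_finrank_eq (B : Subspace ℝ Y) [FiniteDimensional ℝ B]
    (j : ℕ) {ε : ℝ} (hε : 0 < ε) (C : Finset (Y →L[ℝ] ℝ)) :
    ∃ Z : Subspace ℝ Y, FiniteDimensional ℝ Z ∧ B ≤ Z ∧
      ∀ E : Subspace ℝ Y, B ≤ E → [FiniteDimensional ℝ E] →
        Module.finrank ℝ E = Module.finrank ℝ B + j →
        ∃ T : E →ₗ[ℝ] Z, IsApproxEmbedding B C ε T := by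
  set K : ℝ := (1 + j) * (1 + 3 ^ j)
  have hK : 0 < K := by positivity
  obtain ⟨F, hFS, hF⟩ := ContinuousLinearMap.exists_finset_approx
    (isBounded_iff_forall_norm_le.mpr ⟨1 + j, by
      rintro _ ⟨e, he, rfl⟩
      exact norm_adjoinTuple_le he⟩ : Bornology.IsBounded (adjoinTuple B '' {e | ∀ i, ‖e i‖ ≤ 1}))
    C (div_pos hε hK)
  set Z := B ⊔ F.sup fun L => LinearMap.range L.toLinearMap
  refine ⟨Z, inferInstance, le_sup_left, fun E hBE _ hdim => ?_⟩
  obtain ⟨e, heE, he1, hcoeff⟩ := exists_tuple_abs_le_mul_norm B E hBE j hdim.ge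
  have he : ∀ i, ‖e i‖ ≤ 1 := fun i => (he1 i).le
  obtain ⟨_, hzF, happrox⟩ := hF _ ⟨e, he, rfl⟩
  obtain ⟨z, -, rfl⟩ := hFS hzF
  have hbelow := norm_le_mul_norm_adjoinTuple he (by positivity) hcoeff
  have hmemE : ∀ p, adjoinTuple B e p ∈ E := fun p => by
    rw [adjoinTuple_apply]
    exact add_mem (hBE p.1.2) (sum_mem fun i _ => E.smul_mem _ (heE i))
  have hmemZ : ∀ p, adjoinTuple B z p ∈ Z := fun p =>
    mem_sup_right <| Finset.le_sup (f := fun L : B × (Fin j → ℝ) →L[ℝ] Y =>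
      LinearMap.range L.toLinearMap) hzF (LinearMap.mem_range_self _ p)
  have hinj : Function.Injective ((adjoinTuple B e).toLinearMap.codRestrict E hmemE) :=
    (injective_iff_map_eq_zero _).mpr fun p hp => norm_le_zero_iff.mp <|
      (hbelow p).trans_eq (by simp [show adjoinTuple B e p = 0 from congrArg Subtype.val hp])
  let Φ : (B × (Fin j → ℝ)) ≃ₗ[ℝ] E := LinearMap.linearEquivOfInjective _ hinj (by simp [hdim])
  have hrel : ∀ p, ε / K * ‖p‖ ≤ ε * ‖adjoinTuple B e p‖ := fun p => by
    calc ε / K * ‖p‖ ≤ ε / K * (K * ‖adjoinTuple B e p‖) := by grw [hbelow p]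
      _ = ε * ‖adjoinTuple B e p‖ := by field_simp
  refine ⟨_, isApproxEmbedding_comp_symm Φ (fun _ => rfl) (fun x hx => ?_) hmemZ
    (fun p => (happrox p).1.trans (hrel p)) (fun p f hf => ((happrox p).2 f hf).trans (hrel p))⟩
  have : Φ.symm x = (⟨x, hx⟩, 0) := Φ.symm_apply_eq.mpr (Subtype.ext (by simp [Φ]))
  simp [this]

end

theorem finite_dim_lemma_general
    (Y : Type*) [NormedAddCommGroup Y] [NormedSpace ℝ Y]
    (B : Subspace ℝ Y) [FiniteDimensional ℝ B]
    (k : ℕ) (ε : ℝ) (hε : 0 < ε) (C : Finset (Y →L[ℝ] ℝ)) :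
    ∃ Z : Subspace ℝ Y, FiniteDimensional ℝ Z ∧ B ≤ Z ∧
      ∀ E : Subspace ℝ Y, B ≤ E →
        Module.rank ℝ (E ⧸ (B.comap E.subtype)) ≤ (k : Cardinal) →
        ∃ T : E →ₗ[ℝ] Z,
          (∀ e : E, (e : Y) ∈ B → ((T e : Y) = (e : Y))) ∧
          (∀ e : E, (1 - ε) * ‖(e : Y)‖ ≤ ‖(T e : Y)‖ ∧ ‖(T e : Y)‖ ≤ (1 + ε) * ‖(e : Y)‖) ∧
          (∀ e : E, ∀ f ∈ C, |f ((T e : Y)) - f ((e : Y))| ≤ ε * ‖(e : Y)‖) := by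
  choose Zj hfd hBZ hZ using fun j => exists_subspace_isApproxEmbedding_of_finrank_eq B j hε C
  refine ⟨(Finset.range (k + 1)).sup Zj, Submodule.finiteDimensional_finset_sup _ _,
    (hBZ 0).trans (Finset.le_sup (by simp)), fun E hBE hrank => ?_⟩
  obtain ⟨_, j, hjk, hdim⟩ :=
    Submodule.finiteDimensional_and_exists_finrank_eq_of_rank_quotient_comap_le hBE hrank
  obtain ⟨T, hT⟩ := hZ j E hBE hdim
  exact ⟨_, hT.inclusion_comp (Finset.le_sup (Finset.mem_range.mpr (Nat.lt_succ_of_le hjk)))⟩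

theorem finite_dim_lemma
    (Y : Type*) [NormedAddCommGroup Y] [NormedSpace ℝ Y] [CompleteSpace Y]
    (B : Subspace ℝ Y) [FiniteDimensional ℝ B]
    (k : ℕ) (ε : ℝ) (hε : 0 < ε) (C : Finset (Y →L[ℝ] ℝ)) :
    ∃ Z : Subspace ℝ Y, FiniteDimensional ℝ Z ∧ B ≤ Z ∧
      ∀ E : Subspace ℝ Y, B ≤ E →
        Module.rank ℝ (E ⧸ (B.comap E.subtype)) ≤ (k : Cardinal) →
        ∃ T : E →ₗ[ℝ] Z,
          (∀ e : E, (e : Y) ∈ B → ((T e : Y) = (e : Y))) ∧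
          (∀ e : E, (1 - ε) * ‖(e : Y)‖ ≤ ‖(T e : Y)‖ ∧ ‖(T e : Y)‖ ≤ (1 + ε) * ‖(e : Y)‖) ∧
          (∀ e : E, ∀ f ∈ C, |f ((T e : Y)) - f ((e : Y))| ≤ ε * ‖(e : Y)‖) :=
  finite_dim_lemma_general Y B k ε hε C
end

section
/- If a Banach space Y is almost square, then for every finite dimensional subspace E of Y and every ε > 0 there exists y in the unit sphere of Y such that (1−ε)·max(‖x‖, |λ|) ≤ ‖x + λy‖ ≤ (1+ε)·max(‖x‖, |λ|) for all λ ∈ ℝ and all x ∈ E. -/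
/-!
ASQ only controls finitely many unit vectors at a time, but the unit sphere of a finite
dimensional subspace `E` is compact: almost squareness applied to a finite net of it gives a
unit vector `z` with `‖u - z‖ ≤ 1 + ε` for every unit vector `u ∈ E`. Writing `x + λ z` as a
combination of `u ± z` and of `u` or `z` gives the upper bound `(1 + ε) max ‖x‖ |λ|`, and the
lower bound follows from the upper one for `x - λ z`, since
`2 max ‖x‖ |λ| ≤ ‖x + λ z‖ + ‖x - λ z‖`.
-/

open TopologicalSpace Metric

def IsASQ (Y : Type*) [NormedAddCommGroup Y] [NormedSpace ℝ Y] : Prop :=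
  ∀ ε : ℝ, 0 < ε → ∀ N : ℕ, ∀ y : Fin N → Y, (∀ n, ‖y n‖ = 1) →
    ∃ z : Y, ‖z‖ = 1 ∧ ∀ n, ‖y n - z‖ ≤ 1 + ε

section

variable {Y : Type*} [NormedAddCommGroup Y] [NormedSpace ℝ Y]

namespace IsASQ

theorem exists_forall_norm_sub_le_of_finite (hY : IsASQ Y) {ε : ℝ} (hε : 0 < ε) {s : Set Y}
    (hs : s.Finite) (hs₁ : s ⊆ sphere 0 1) :
    ∃ z : Y, ‖z‖ = 1 ∧ ∀ y ∈ s, ‖y - z‖ ≤ 1 + ε := by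
  obtain ⟨N, y, -, rfl⟩ := hs.fin_param
  obtain ⟨z, hz, hyz⟩ := hY ε hε N y fun n => by simpa using hs₁ (Set.mem_range_self n)
  exact ⟨z, hz, Set.forall_mem_range.2 hyz⟩

theorem exists_forall_norm_sub_le_of_isCompact (hY : IsASQ Y) {ε : ℝ} (hε : 0 < ε) {K : Set Y}
    (hK : IsCompact K) (hK₁ : K ⊆ sphere 0 1) :
    ∃ z : Y, ‖z‖ = 1 ∧ ∀ y ∈ K, ‖y - z‖ ≤ 1 + ε := by
  obtain ⟨t, htK, ht, hKt⟩ := hK.finite_cover_balls (half_pos hε)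
  obtain ⟨z, hz, htz⟩ := hY.exists_forall_norm_sub_le_of_finite (half_pos hε) ht (htK.trans hK₁)
  refine ⟨z, hz, fun y hy => ?_⟩
  obtain ⟨u, hu, hyu⟩ := Set.mem_iUnion₂.1 (hKt hy)
  calc ‖y - z‖ ≤ ‖y - u‖ + ‖u - z‖ := norm_sub_le_norm_sub_add_norm_sub y u z
    _ ≤ ε / 2 + (1 + ε / 2) := add_le_add (mem_ball_iff_norm.1 hyu).le (htz u hu)
    _ = 1 + ε := by ring

end IsASQ

theorem norm_smul_add_smul_le {u z : Y} (hu : ‖u‖ ≤ 1) (hz : ‖z‖ ≤ 1) {C : ℝ} (hC : 1 ≤ C)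
    (huz : ‖u + z‖ ≤ C) {a b : ℝ} (ha : 0 ≤ a) (hb : 0 ≤ b) :
    ‖a • u + b • z‖ ≤ C * max a b := by
  rcases le_total b a with hba | hab
  · calc ‖a • u + b • z‖ = ‖(a - b) • u + b • (u + z)‖ := by congr 1; module
      _ ≤ (a - b) * ‖u‖ + b * ‖u + z‖ := by
          grw [norm_add_le, norm_smul_of_nonneg (sub_nonneg.2 hba), norm_smul_of_nonneg hb]
      _ ≤ C * max a b := by
          rw [max_eq_left hba]; nlinarith [mul_le_mul_of_nonneg_left huz hb]
  · calc ‖a • u + b • z‖ = ‖a • (u + z) + (b - a) • z‖ := by congr 1; module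
      _ ≤ a * ‖u + z‖ + (b - a) * ‖z‖ := by
          grw [norm_add_le, norm_smul_of_nonneg ha, norm_smul_of_nonneg (sub_nonneg.2 hab)]
      _ ≤ C * max a b := by
          rw [max_eq_right hab]; nlinarith [mul_le_mul_of_nonneg_left huz ha]

theorem Submodule.norm_add_smul_le_of_forall_norm_sub_le (E : Submodule ℝ Y) {z : Y}
    (hz : ‖z‖ ≤ 1) {C : ℝ} (hC : 1 ≤ C) (hEz : ∀ u ∈ E, ‖u‖ = 1 → ‖u - z‖ ≤ C)
    {x : Y} (hx : x ∈ E) (l : ℝ) :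
    ‖x + l • z‖ ≤ C * max ‖x‖ |l| := by
  rcases eq_or_ne x 0 with rfl | hx₀
  · rw [zero_add, norm_smul, norm_zero, max_eq_right (abs_nonneg l), Real.norm_eq_abs]
    nlinarith [abs_nonneg l]
  have key : ∀ x ∈ E, x ≠ 0 → ∀ l ≤ 0, ‖x + l • z‖ ≤ C * max ‖x‖ |l| := by
    intro x hx hx₀ l hl
    set u := ‖x‖⁻¹ • x
    have hu : ‖u‖ = 1 := norm_smul_inv_norm hx₀
    have hxu : x = ‖x‖ • u := by simp [u, smul_smul, norm_ne_zero_iff.2 hx₀]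
    calc ‖x + l • z‖ = ‖‖x‖ • u + |l| • -z‖ := by
          rw [abs_of_nonpos hl]; conv_lhs => rw [hxu]
          congr 1; module
      _ ≤ C * max ‖x‖ |l| :=
          norm_smul_add_smul_le hu.le (by rwa [norm_neg]) hC
            (by simpa [sub_eq_add_neg] using hEz u (E.smul_mem _ hx) hu)
            (norm_nonneg x) (abs_nonneg l)
  rcases le_total l 0 with hl | hl
  · exact key x hx hx₀ l hl
  · have := key (-x) (E.neg_mem hx) (neg_ne_zero.2 hx₀) (-l) (by linarith)
    rwa [neg_smul, ← neg_add, norm_neg, norm_neg, abs_neg] at this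

theorem two_mul_max_le_norm_add_add_norm_sub {z : Y} (hz : ‖z‖ = 1) (x : Y) (l : ℝ) :
    2 * max ‖x‖ |l| ≤ ‖x + l • z‖ + ‖x - l • z‖ := by
  rw [mul_max_of_nonneg _ _ zero_le_two]
  refine max_le ?_ ?_
  · calc 2 * ‖x‖ = ‖(x + l • z) + (x - l • z)‖ := by
          rw [add_add_sub_cancel, ← two_smul ℝ, norm_smul, Real.norm_two]
      _ ≤ _ := norm_add_le _ _
  · calc 2 * |l| = ‖(x + l • z) - (x - l • z)‖ := by
          rw [add_sub_sub_cancel, ← two_smul ℝ, norm_smul, norm_smul, hz, Real.norm_two,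
            Real.norm_eq_abs, mul_one]
      _ ≤ _ := norm_sub_le _ _

end

theorem asq_findim_general
    (Y : Type*) [NormedAddCommGroup Y] [NormedSpace ℝ Y]
    (hY : IsASQ Y) :
    ∀ E : Subspace ℝ Y, FiniteDimensional ℝ E → ∀ ε : ℝ, 0 < ε →
      ∃ y : Y, ‖y‖ = 1 ∧ ∀ (l : ℝ) (x : Y), x ∈ E →
        (1 - ε) * max ‖x‖ |l| ≤ ‖x + l • y‖ ∧ ‖x + l • y‖ ≤ (1 + ε) * max ‖x‖ |l| := by
  intro E hE ε hε
  obtain ⟨z, hz, hEz⟩ := hY.exists_forall_norm_sub_le_of_isCompact hε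
    ((isCompact_sphere (0 : E) 1).image continuous_subtype_val)
    (by rintro _ ⟨u, hu, rfl⟩; simpa using hu)
  have hup : ∀ x ∈ E, ∀ l : ℝ, ‖x + l • z‖ ≤ (1 + ε) * max ‖x‖ |l| :=
    fun x hx => E.norm_add_smul_le_of_forall_norm_sub_le hz.le (by linarith)
      (fun u hu hu₁ => hEz u ⟨⟨u, hu⟩, by simpa using hu₁, rfl⟩) hx
  refine ⟨z, hz, fun l x hx => ⟨?_, hup x hx l⟩⟩
  have hsum := two_mul_max_le_norm_add_add_norm_sub hz x l
  have hneg := hup x hx (-l)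
  rw [abs_neg, neg_smul, ← sub_eq_add_neg] at hneg
  linarith

theorem asq_findim
    (Y : Type*) [NormedAddCommGroup Y] [NormedSpace ℝ Y] [CompleteSpace Y]
    (hY : IsASQ Y) :
    ∀ E : Subspace ℝ Y, FiniteDimensional ℝ E → ∀ ε : ℝ, 0 < ε →
      ∃ y : Y, ‖y‖ = 1 ∧ ∀ (l : ℝ) (x : Y), x ∈ E →
        (1 - ε) * max ‖x‖ |l| ≤ ‖x + l • y‖ ∧ ‖x + l • y‖ ≤ (1 + ε) * max ‖x‖ |l| :=
  asq_findim_general Y hY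
end

section
/- Every almost square Banach space contains an isomorphic copy of c₀. -/
/-!
Given a finite-dimensional subspace `V` and `ε > 0`, apply almost squareness to a finite net of
`±` the unit sphere of `V`: the resulting unit vector `z` satisfies
`‖x + t • z‖ ≤ (1 + ε) * max ‖x‖ |t|` for all `x ∈ V`. Choosing `z₀, z₁, …` this way with
`εₙ = 2⁻⁽ⁿ⁺³⁾` yields `‖∑ aᵢ • zᵢ‖ ≤ 3/2 * max |aᵢ|`. Flipping the sign of one coefficient `aₘ`
changes the sum by `2 aₘ zₘ`, whence `‖∑ aᵢ • zᵢ‖ ≥ 1/2 * max |aᵢ|`. So `f ↦ ∑' i, f i • zᵢ`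
is an isomorphism of `c₀` onto a closed subspace.
-/

open TopologicalSpace Metric

open Filter Topology Submodule ZeroAtInfty

section

variable {Y : Type*} [NormedAddCommGroup Y] [NormedSpace ℝ Y]

theorem norm_smul_add_smul_le_of_nonneg {w z : Y} (hw : ‖w‖ = 1) (hz : ‖z‖ = 1) {ε : ℝ}
    (hε : 0 ≤ ε) (hadd : ‖w + z‖ ≤ 1 + ε) {s t : ℝ} (hs : 0 ≤ s) (ht : 0 ≤ t) :
    ‖s • w + t • z‖ ≤ (1 + ε) * max s t := by
  set m := min s t
  have hdecomp : s • w + t • z = m • (w + z) + ((s - m) • w + (t - m) • z) := by module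
  have hsm : 0 ≤ s - m := sub_nonneg.2 (min_le_left s t)
  have htm : 0 ≤ t - m := sub_nonneg.2 (min_le_right s t)
  have hm : 0 ≤ m := le_min hs ht
  calc ‖s • w + t • z‖ ≤ m * (1 + ε) + ((s - m) * 1 + (t - m) * 1) := by
        rw [hdecomp]
        refine norm_add_le_of_le ?_ (norm_add_le_of_le ?_ ?_) <;>
          rw [norm_smul, Real.norm_of_nonneg ‹_›] <;> gcongr <;> simp [hw, hz]
    _ = max s t + ε * m := by linarith [min_add_max s t]
    _ ≤ (1 + ε) * max s t := by nlinarith [min_le_max (a := s) (b := t)]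

theorem norm_smul_add_smul_le_s11 {w z : Y} (hw : ‖w‖ = 1) (hz : ‖z‖ = 1) {ε : ℝ} (hε : 0 ≤ ε)
    (hadd : ‖w + z‖ ≤ 1 + ε) (hsub : ‖w - z‖ ≤ 1 + ε) {s : ℝ} (hs : 0 ≤ s) (t : ℝ) :
    ‖s • w + t • z‖ ≤ (1 + ε) * max s |t| := by
  rcases le_total 0 t with ht | ht
  · rw [abs_of_nonneg ht]
    exact norm_smul_add_smul_le_of_nonneg hw hz hε hadd hs ht
  · rw [abs_of_nonpos ht, show t • z = (-t) • (-z) by module]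
    exact norm_smul_add_smul_le_of_nonneg hw (by rwa [norm_neg]) hε
      (by rwa [← sub_eq_add_neg]) hs (neg_nonneg.2 ht)

theorem IsASQ.exists_forall_norm_add_le_and_norm_sub_le (hY : IsASQ Y) {u : Set Y}
    (hu : u.Finite) (hu1 : ∀ y ∈ u, ‖y‖ = 1) {ε : ℝ} (hε : 0 < ε) :
    ∃ z : Y, ‖z‖ = 1 ∧ ∀ y ∈ u, ‖y + z‖ ≤ 1 + ε ∧ ‖y - z‖ ≤ 1 + ε := by
  obtain ⟨N, y, -, hy⟩ := (hu.union (hu.image Neg.neg)).fin_param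
  have hy1 : ∀ n, ‖y n‖ = 1 := by
    intro n
    obtain hn | ⟨x, hx, hxn⟩ := hy ▸ Set.mem_range_self n
    · exact hu1 _ hn
    · rw [← hxn, norm_neg, hu1 x hx]
  obtain ⟨z, hz1, hz⟩ := hY ε hε N y hy1
  have hclose : ∀ x ∈ u ∪ Neg.neg '' u, ‖x - z‖ ≤ 1 + ε := by
    rw [← hy]
    rintro _ ⟨n, rfl⟩
    exact hz n
  refine ⟨z, hz1, fun x hx => ⟨?_, hclose x (Or.inl hx)⟩⟩
  rw [← norm_neg, neg_add']
  exact hclose _ (Or.inr ⟨x, hx, rfl⟩)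

theorem IsASQ.exists_forall_norm_add_smul_le (hY : IsASQ Y) (V : Submodule ℝ Y)
    [FiniteDimensional ℝ V] {ε : ℝ} (hε : 0 < ε) :
    ∃ z : Y, ‖z‖ = 1 ∧ ∀ x ∈ V, ∀ t : ℝ, ‖x + t • z‖ ≤ (1 + ε) * max ‖x‖ |t| := by
  obtain ⟨net, hnet_sphere, hnet_fin, hnet_cover⟩ :=
    finite_approx_of_totallyBounded (isCompact_sphere (0 : V) 1).totallyBounded (ε / 2)
      (by positivity)
  have hnet1 : ∀ w ∈ net, ‖(w : Y)‖ = 1 := fun w hw => by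
    simpa using hnet_sphere hw
  obtain ⟨z, hz1, hz⟩ := hY.exists_forall_norm_add_le_and_norm_sub_le (hnet_fin.image (↑))
    (by rintro _ ⟨w, hw, rfl⟩; exact hnet1 w hw) (half_pos hε)
  refine ⟨z, hz1, fun x hx t => ?_⟩
  rcases eq_or_ne x 0 with rfl | hx0
  · rw [zero_add, norm_smul, hz1, Real.norm_eq_abs, norm_zero, max_eq_right (abs_nonneg t)]
    nlinarith [abs_nonneg t]
  obtain ⟨w, hw, hxw⟩ : ∃ w ∈ net, dist (‖x‖⁻¹ • (⟨x, hx⟩ : V)) w < ε / 2 := by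
    simpa using hnet_cover (show ‖x‖⁻¹ • (⟨x, hx⟩ : V) ∈ sphere 0 1 by
      simp [norm_smul, hx0])
  obtain ⟨hwz_add, hwz_sub⟩ := hz w (Set.mem_image_of_mem _ hw)
  have hnear : ‖x - ‖x‖ • (w : Y)‖ ≤ ε / 2 * ‖x‖ := by
    have : x - ‖x‖ • (w : Y) = ‖x‖ • (‖x‖⁻¹ • x - w) := by
      rw [smul_sub, smul_inv_smul₀ (norm_ne_zero_iff.2 hx0)]
    rw [this, norm_smul, norm_norm, mul_comm]
    rw [dist_eq_norm] at hxw
    exact mul_le_mul_of_nonneg_right hxw.le (norm_nonneg x)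
  calc ‖x + t • z‖ = ‖(‖x‖ • (w : Y) + t • z) + (x - ‖x‖ • (w : Y))‖ := by congr 1; abel
    _ ≤ (1 + ε / 2) * max ‖x‖ |t| + ε / 2 * ‖x‖ :=
        norm_add_le_of_le (norm_smul_add_smul_le_s11 (hnet1 w hw) hz1 (by positivity) hwz_add
          hwz_sub (norm_nonneg x) t) hnear
    _ ≤ (1 + ε) * max ‖x‖ |t| := by nlinarith [le_max_left ‖x‖ |t|]

theorem IsASQ.exists_seq_forall_norm_add_smul_le (hY : IsASQ Y) {ε : ℕ → ℝ}
    (hε : ∀ n, 0 < ε n) :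
    ∃ z : ℕ → Y, (∀ n, ‖z n‖ = 1) ∧
      ∀ n, ∀ x ∈ span ℝ (z '' Set.Iio n), ∀ t : ℝ, ‖x + t • z n‖ ≤ (1 + ε n) * max ‖x‖ |t| := by
  classical
  choose next hnext_norm hnext using fun (s : Finset Y) (n : ℕ) =>
    hY.exists_forall_norm_add_smul_le (span ℝ (s : Set Y)) (hε n)
  let prefixes : ℕ → Finset Y := fun n =>
    Nat.rec (motive := fun _ => Finset Y) ∅ (fun k s => insert (next s k) s) n
  have hprefixes : ∀ n, (prefixes n : Set Y) = (fun k => next (prefixes k) k) '' Set.Iio n := by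
    intro n
    induction n with
    | zero => simp [prefixes]
    | succ n ih =>
      rw [Set.Iio_add_one_eq_Iic, ← Set.Iio_insert, Set.image_insert_eq, ← ih]
      exact Finset.coe_insert _ _
  refine ⟨fun n => next (prefixes n) n, fun n => hnext_norm _ n, fun n => ?_⟩
  rw [← hprefixes]
  exact hnext _ n

theorem norm_sum_range_smul_le {z : ℕ → Y}
    (hz : ∀ n, ∀ x ∈ span ℝ (z '' Set.Iio n), ∀ t : ℝ,
      ‖x + t • z n‖ ≤ (1 + (1 / 2) ^ (n + 3)) * max ‖x‖ |t|)
    (a : ℕ → ℝ) {M : ℝ} (hM : 0 ≤ M) :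
    ∀ n, (∀ i < n, |a i| ≤ M) →
      ‖∑ i ∈ Finset.range n, a i • z i‖ ≤ (3 / 2 - (1 / 2) ^ (n + 1)) * M
  | 0, _ => by norm_num; exact hM
  | n + 1, ha => by
    set x := ∑ i ∈ Finset.range n, a i • z i
    have hx : ‖x‖ ≤ (3 / 2 - (1 / 2) ^ (n + 1)) * M :=
      norm_sum_range_smul_le hz a hM n fun i hi => ha i (by omega)
    have hx_mem : x ∈ span ℝ (z '' Set.Iio n) :=
      sum_mem fun i hi => smul_mem _ _ (subset_span ⟨i, by simpa using hi, rfl⟩)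
    have hp : (1 / 2 : ℝ) ^ (n + 1) ≤ 1 / 2 :=
      pow_le_of_le_one (by norm_num) (by norm_num) (by omega)
    have hp0 : (0 : ℝ) < (1 / 2) ^ (n + 1) := by positivity
    have hmax : max ‖x‖ |a n| ≤ (3 / 2 - (1 / 2) ^ (n + 1)) * M :=
      max_le hx (by nlinarith [ha n (by omega)])
    rw [Finset.sum_range_succ]
    calc ‖x + a n • z n‖ ≤ (1 + (1 / 2) ^ (n + 3)) * max ‖x‖ |a n| := hz n x hx_mem (a n)
      _ ≤ (1 + (1 / 2) ^ (n + 3)) * ((3 / 2 - (1 / 2) ^ (n + 1)) * M) := by gcongr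
      _ ≤ (3 / 2 - (1 / 2) ^ (n + 1 + 1)) * M := by
        rw [show (1 / 2 : ℝ) ^ (n + 3) = (1 / 2) ^ (n + 1) / 4 by ring,
          show (1 / 2 : ℝ) ^ (n + 1 + 1) = (1 / 2) ^ (n + 1) / 2 by ring]
        have hp2 : 0 ≤ (1 / 2 : ℝ) ^ (n + 1) / 8 + ((1 / 2) ^ (n + 1)) ^ 2 / 4 := by positivity
        nlinarith [mul_nonneg hp2 hM]

def HasUpperC0Estimate (z : ℕ → Y) (C : ℝ) : Prop :=
  ∀ (s : Finset ℕ) (a : ℕ → ℝ) (M : ℝ), 0 ≤ M → (∀ i ∈ s, |a i| ≤ M) →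
    ‖∑ i ∈ s, a i • z i‖ ≤ C * M

theorem HasUpperC0Estimate.of_range {z : ℕ → Y} {C : ℝ}
    (h : ∀ (n : ℕ) (a : ℕ → ℝ) (M : ℝ), 0 ≤ M → (∀ i < n, |a i| ≤ M) →
      ‖∑ i ∈ Finset.range n, a i • z i‖ ≤ C * M) :
    HasUpperC0Estimate z C := by
  classical
  intro s a M hM ha
  obtain ⟨n, hsn⟩ := s.exists_nat_subset_range
  have hsum : ∑ i ∈ s, a i • z i = ∑ i ∈ Finset.range n, (if i ∈ s then a i else 0) • z i := by
    simp only [ite_smul, zero_smul, Finset.sum_ite_mem, Finset.inter_eq_right.2 hsn]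
  rw [hsum]
  refine h n _ M hM fun i _ => ?_
  split_ifs with hi
  exacts [ha i hi, by simpa using hM]

namespace HasUpperC0Estimate

variable {z : ℕ → Y} {C : ℝ}

theorem summable [CompleteSpace Y] (hz : HasUpperC0Estimate z C) {a : ℕ → ℝ}
    (ha : Tendsto a atTop (𝓝 0)) : Summable fun i => a i • z i := by
  refine summable_iff_vanishing_norm.2 fun ε hε => ?_
  set δ := ε / (|C| + 1)
  have hδ : 0 < δ := by positivity
  obtain ⟨N, hN⟩ := Metric.tendsto_atTop.1 ha δ hδ
  refine ⟨Finset.range N, fun t ht => ?_⟩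
  have hsmall : ∀ i ∈ t, |a i| ≤ δ := fun i hi => by
    have hNi : N ≤ i := not_lt.1 fun h => Finset.disjoint_left.1 ht hi (Finset.mem_range.2 h)
    simpa using (hN i hNi).le
  calc ‖∑ i ∈ t, a i • z i‖ ≤ C * δ := hz t a δ hδ.le hsmall
    _ ≤ |C| * δ := by gcongr; exact le_abs_self C
    _ < (|C| + 1) * δ := by gcongr; linarith
    _ = ε := mul_div_cancel₀ ε (by positivity)

theorem norm_tsum_le (hz : HasUpperC0Estimate z C) {a : ℕ → ℝ}
    (hs : Summable fun i => a i • z i) {M : ℝ} (hM : 0 ≤ M) (ha : ∀ i, |a i| ≤ M) :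
    ‖∑' i, a i • z i‖ ≤ C * M :=
  le_of_tendsto' hs.hasSum.norm fun s => hz s a M hM fun i _ => ha i

theorem two_mul_abs_le_norm_sum_add (hz : HasUpperC0Estimate z C) (hz1 : ∀ i, ‖z i‖ = 1)
    {s : Finset ℕ} {a : ℕ → ℝ} {M : ℝ} (hM : 0 ≤ M) (ha : ∀ i ∈ s, |a i| ≤ M) {m : ℕ}
    (hm : m ∈ s) : 2 * |a m| ≤ ‖∑ i ∈ s, a i • z i‖ + C * M := by
  classical
  let b : ℕ → ℝ := Function.update a m (-a m)
  have hb : ∀ i ∈ s, |b i| ≤ M := fun i hi => by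
    rcases eq_or_ne i m with rfl | him
    · simpa [b] using ha i hi
    · simpa [b, him] using ha i hi
  have hdiff : ∑ i ∈ s, a i • z i - ∑ i ∈ s, b i • z i = (2 * a m) • z m := by
    rw [← Finset.sum_sub_distrib, Finset.sum_eq_single_of_mem m hm fun i _ him => by
      simp [b, him]]
    simp only [b, Function.update_self]
    module
  calc 2 * |a m| = ‖∑ i ∈ s, a i • z i - ∑ i ∈ s, b i • z i‖ := by
        rw [hdiff, norm_smul, hz1, mul_one, Real.norm_eq_abs, abs_mul, abs_two]
    _ ≤ ‖∑ i ∈ s, a i • z i‖ + ‖∑ i ∈ s, b i • z i‖ := norm_sub_le _ _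
    _ ≤ ‖∑ i ∈ s, a i • z i‖ + C * M := by gcongr; exact hz s b M hM hb

theorem two_mul_abs_le_norm_tsum_add (hz : HasUpperC0Estimate z C) (hz1 : ∀ i, ‖z i‖ = 1)
    {a : ℕ → ℝ} (hs : Summable fun i => a i • z i) {M : ℝ} (hM : 0 ≤ M)
    (ha : ∀ i, |a i| ≤ M) (m : ℕ) : 2 * |a m| ≤ ‖∑' i, a i • z i‖ + C * M :=
  ge_of_tendsto (hs.hasSum.norm.add_const (C * M)) <|
    (eventually_ge_atTop {m}).mono fun _ hm =>
      hz.two_mul_abs_le_norm_sum_add hz1 hM (fun i _ => ha i) (Finset.singleton_subset_iff.1 hm)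

end HasUpperC0Estimate

end

namespace ZeroAtInftyContinuousMap

variable {β : Type*} [NormedAddCommGroup β]

theorem tendsto_atTop_zero (f : C₀(ℕ, β)) : Tendsto f atTop (𝓝 0) :=
  cocompact_eq_atTop (α := ℕ) ▸ zero_at_infty f

variable {α : Type*} [TopologicalSpace α]

theorem norm_apply_le (f : C₀(α, β)) (x : α) : ‖f x‖ ≤ ‖f‖ :=
  norm_toBCF_eq_norm (f := f) ▸ f.toBCF.norm_coe_le_norm x

theorem norm_le_of_forall_le {f : C₀(α, β)} {M : ℝ} (hM : 0 ≤ M) (hf : ∀ x, ‖f x‖ ≤ M) :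
    ‖f‖ ≤ M :=
  norm_toBCF_eq_norm (f := f) ▸ (BoundedContinuousFunction.norm_le hM).2 hf

end ZeroAtInftyContinuousMap

namespace HasUpperC0Estimate

variable {Y : Type*} [NormedAddCommGroup Y] [NormedSpace ℝ Y] [CompleteSpace Y]
  {z : ℕ → Y} {C : ℝ}

theorem summable_c0 (hz : HasUpperC0Estimate z C) (f : C₀(ℕ, ℝ)) :
    Summable fun i => f i • z i :=
  hz.summable f.tendsto_atTop_zero

noncomputable def c0Map (hz : HasUpperC0Estimate z C) : C₀(ℕ, ℝ) →L[ℝ] Y :=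
  LinearMap.mkContinuous
    { toFun := fun f => ∑' i, f i • z i
      map_add' := fun f g => by
        simp only [ZeroAtInftyContinuousMap.coe_add, Pi.add_apply, add_smul]
        exact (hz.summable_c0 f).tsum_add (hz.summable_c0 g)
      map_smul' := fun c f => by
        simp only [ZeroAtInftyContinuousMap.coe_smul, Pi.smul_apply, smul_assoc,
          RingHom.id_apply]
        exact (hz.summable_c0 f).tsum_const_smul c }
    C fun f => hz.norm_tsum_le (hz.summable_c0 f) (norm_nonneg f) f.norm_apply_le

theorem sub_mul_norm_le_norm_c0Map (hz : HasUpperC0Estimate z C) (hz1 : ∀ i, ‖z i‖ = 1)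
    (f : C₀(ℕ, ℝ)) : (2 - C) * ‖f‖ ≤ ‖hz.c0Map f‖ := by
  have hcoord : ∀ m, 2 * ‖f m‖ ≤ ‖hz.c0Map f‖ + C * ‖f‖ := fun m =>
    hz.two_mul_abs_le_norm_tsum_add hz1 (hz.summable_c0 f) (norm_nonneg f) f.norm_apply_le m
  have hnonneg : 0 ≤ (‖hz.c0Map f‖ + C * ‖f‖) / 2 := by
    linarith [hcoord 0, norm_nonneg (f 0)]
  have := f.norm_le_of_forall_le hnonneg fun m => by linarith [hcoord m]
  linarith

end HasUpperC0Estimate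

theorem ContinuousLinearMap.exists_isClosed_submodule_equiv_of_antilipschitz
    {𝕜 E F : Type*} [NontriviallyNormedField 𝕜] [NormedAddCommGroup E] [NormedSpace 𝕜 E]
    [CompleteSpace E] [NormedAddCommGroup F] [NormedSpace 𝕜 F] [CompleteSpace F]
    (T : E →L[𝕜] F) {K : NNReal} (hT : AntilipschitzWith K T) :
    ∃ X : Submodule 𝕜 F, IsClosed (X : Set F) ∧ Nonempty (X ≃L[𝕜] E) := by
  have hclosed : IsClosed (Set.range T) := hT.isClosed_range T.uniformContinuous
  exact ⟨(T : E →ₗ[𝕜] F).range, by rwa [LinearMap.coe_range, ContinuousLinearMap.coe_coe],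
    ⟨(T.equivRange hT.injective hclosed).symm⟩⟩

theorem asq_contains_c0
    (Y : Type*) [NormedAddCommGroup Y] [NormedSpace ℝ Y] [CompleteSpace Y]
    (hY : IsASQ Y) :
    ∃ X : Subspace ℝ Y, IsClosed (X : Set Y) ∧
      Nonempty (X ≃L[ℝ] ZeroAtInftyContinuousMap ℕ ℝ) := by
  obtain ⟨z, hz1, hz⟩ := hY.exists_seq_forall_norm_add_smul_le
    (ε := fun n => (1 / 2) ^ (n + 3)) fun n => by positivity
  have hC : HasUpperC0Estimate z (3 / 2) := .of_range fun n a M hM ha =>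
    (norm_sum_range_smul_le hz a hM n ha).trans <| by
      gcongr; linarith [pow_pos (by norm_num : (0 : ℝ) < 1 / 2) (n + 1)]
  refine hC.c0Map.exists_isClosed_submodule_equiv_of_antilipschitz
    (hC.c0Map.antilipschitz_of_bound (K := 2) fun f => ?_)
  have := hC.sub_mul_norm_le_norm_c0Map hz1 f
  push_cast
  linarith
end

section
/- Let Y be an almost square Banach space and X a closed subspace of Y such that the quotient Y/X contains no isomorphic copy of c₀. Then X is almost square. -/
/-
Iterating the almost-square property, against the unit vectors `x₁, …, x_N` of `X` and also
against the normalized signed sums of the vectors already chosen, produces unit vectors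
`z₀, z₁, …` of `Y` with `‖xₙ - z_k‖ ≤ 1 + δ` and `‖∑_{j ∈ F} ±z_j‖ ≤ 2` for all finite `F`.
Their images `w_k` in `Y/X` satisfy the same bound on signed sums. If some `‖w_k‖ < δ`, then
`z_k` is `δ`-close to `X`, and normalizing a nearby point of `X` gives the required element of
`S_X`. Otherwise `(w_k)` is bounded below with bounded signed sums in the Banach space `Y/X`,
and a gliding hump (as in Bessaga–Pełczyński) yields a subsequence `w_{n_k}` and almost
biorthogonal functionals for which `a ↦ ∑ a_k w_{n_k}` embeds `c₀` isomorphically onto a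
closed subspace of `Y/X`.
-/

open TopologicalSpace Metric

open Finset Function Filter

section NormedSpace

variable {E : Type*} [SeminormedAddCommGroup E] [NormedSpace ℝ E]

lemma norm_add_smul_le_max (V W : E) {t : ℝ} (ht : |t| ≤ 1) :
    ‖V + t • W‖ ≤ max ‖V + W‖ ‖V - W‖ := by
  obtain ⟨ht₁, ht₂⟩ := abs_le.mp ht
  have hV : V + t • W = ((1 + t) / 2) • (V + W) + ((1 - t) / 2) • (V - W) := by module
  calc ‖V + t • W‖ ≤ (1 + t) / 2 * ‖V + W‖ + (1 - t) / 2 * ‖V - W‖ := by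
        rw [hV]
        refine (norm_add_le _ _).trans_eq ?_
        rw [norm_smul, norm_smul, Real.norm_of_nonneg (by linarith),
          Real.norm_of_nonneg (by linarith)]
    _ ≤ (1 + t) / 2 * max ‖V + W‖ ‖V - W‖ + (1 - t) / 2 * max ‖V + W‖ ‖V - W‖ := by
        gcongr <;> first | linarith | exact le_max_left _ _ | exact le_max_right _ _
    _ = max ‖V + W‖ ‖V - W‖ := by ring

lemma norm_smul_add_smul_le_s13 {u z : E} {C : ℝ} (hadd : ‖u + z‖ ≤ C) (hsub : ‖u - z‖ ≤ C)
    {a b : ℝ} (ha : |a| ≤ 1) (hb : |b| ≤ 1) : ‖a • u + b • z‖ ≤ C := by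
  refine (norm_add_smul_le_max _ _ hb).trans (max_le ?_ ?_)
  · rw [add_comm]
    refine (norm_add_smul_le_max _ _ ha).trans (max_le ?_ ?_)
    · rwa [add_comm]
    · rwa [← norm_neg, neg_sub]
  · rw [sub_eq_neg_add]
    refine (norm_add_smul_le_max _ _ ha).trans (max_le ?_ ?_)
    · rwa [neg_add_eq_sub]
    · rwa [← norm_neg, neg_sub, sub_neg_eq_add]

lemma norm_smul_add_smul_le_mul_max {u z : E} {C r s : ℝ} (hadd : ‖u + z‖ ≤ C)
    (hsub : ‖u - z‖ ≤ C) (hr : 0 ≤ r) (hs : |s| ≤ 1) : ‖r • u + s • z‖ ≤ C * max r 1 := by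
  set m := max r 1
  have hm : 0 < m := lt_max_of_lt_right one_pos
  have hrm : |r / m| ≤ 1 := by
    rw [abs_div, abs_of_nonneg hr, abs_of_pos hm, div_le_one hm]; exact le_max_left _ _
  have hsm : |s / m| ≤ 1 := by
    rw [abs_div, abs_of_pos hm, div_le_one hm]; exact hs.trans (le_max_right _ _)
  calc ‖r • u + s • z‖ = ‖m • ((r / m) • u + (s / m) • z)‖ := by
        rw [smul_add, smul_smul, smul_smul, mul_div_cancel₀ _ hm.ne', mul_div_cancel₀ _ hm.ne']
    _ = m * ‖(r / m) • u + (s / m) • z‖ := by rw [norm_smul, Real.norm_of_nonneg hm.le]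
    _ ≤ m * C := by gcongr; exact norm_smul_add_smul_le_s13 hadd hsub hrm hsm
    _ = C * m := mul_comm _ _

lemma norm_sub_inv_norm_smul_le (x : E) {z : E} (hz : ‖z‖ = 1) :
    ‖x - ‖x‖⁻¹ • x‖ ≤ ‖x - z‖ := by
  rcases eq_or_ne ‖x‖ 0 with hx | hx
  · simp [hx]
  calc ‖x - ‖x‖⁻¹ • x‖ = |(1 - ‖x‖⁻¹) * ‖x‖| := by
        nth_rw 1 [← one_smul ℝ x]
        rw [← sub_smul, norm_smul, Real.norm_eq_abs, abs_mul, abs_norm]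
    _ = |‖x‖ - ‖z‖| := by rw [hz, sub_mul, one_mul, inv_mul_cancel₀ hx]
    _ ≤ ‖x - z‖ := abs_norm_sub_norm_le x z

lemma norm_sub_inv_norm_smul_le_add (x y : E) {z : E} (hz : ‖z‖ = 1) :
    ‖y - ‖x‖⁻¹ • x‖ ≤ ‖y - z‖ + 2 * ‖x - z‖ := by
  calc ‖y - ‖x‖⁻¹ • x‖ ≤ ‖y - z‖ + ‖z - x‖ + ‖x - ‖x‖⁻¹ • x‖ :=
        (norm_sub_le_norm_sub_add_norm_sub _ x _).trans
          (add_le_add_left (norm_sub_le_norm_sub_add_norm_sub _ _ _) _)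
    _ ≤ ‖y - z‖ + 2 * ‖x - z‖ := by
        rw [norm_sub_rev z x]; linarith [norm_sub_inv_norm_smul_le x hz]

end NormedSpace

theorem exists_seq_of_forall_exists_update {α : Type*} (Q : α → Prop) (P : ℕ → (ℕ → α) → Prop)
    (hP : ∀ k v v', (∀ j < k, v j = v' j) → P k v → P k v') (v₀ : ℕ → α) (h₀ : P 0 v₀)
    (step : ∀ k v, P k v → ∃ a, Q a ∧ P (k + 1) (update v k a)) :
    ∃ v : ℕ → α, (∀ k, Q (v k)) ∧ ∀ k, P k v := by
  choose a ha using step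
  let V : (k : ℕ) → {v // P k v} := fun k =>
    Nat.rec ⟨v₀, h₀⟩ (fun k v => ⟨update v.1 k (a k v.1 v.2), (ha k v.1 v.2).2⟩) k
  have hV : ∀ k, ∀ j < k, (V k).1 j = (V (j + 1)).1 j := by
    intro k
    induction k with
    | zero => intro j hj; omega
    | succ k ih =>
      intro j hj
      rcases (Nat.lt_succ_iff_lt_or_eq.mp hj) with hj | rfl
      · exact (update_of_ne hj.ne _ _).trans (ih j hj)
      · rfl
  refine ⟨fun j => (V (j + 1)).1 j, fun k => ?_, fun k => hP k _ _ (hV k) (V k).2⟩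
  have : (V (k + 1)).1 k = a k (V k).1 (V k).2 := update_self _ _ _
  simpa only [this] using (ha k _ _).1

lemma SignType.abs_coe_le_one (s : SignType) : |(s : ℝ)| ≤ 1 := by
  cases s <;> simp

section SignSums

variable {E : Type*} [SeminormedAddCommGroup E] [NormedSpace ℝ E]

-- `σ` takes the values `-1, 0, 1`, so this bounds `‖∑ j ∈ F, ±w j‖` for every finite `F`:
-- the series `∑ w j` is weakly unconditionally Cauchy.
def BoundedSignSums (w : ℕ → E) (C : ℝ) : Prop :=
  ∀ (n : ℕ) (σ : ℕ → SignType), ‖∑ j ∈ range n, (σ j : ℝ) • w j‖ ≤ C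

lemma norm_add_sum_range_smul_le_of_signs {w : ℕ → E} {C : ℝ} (n : ℕ) {u : E}
    (hu : ∀ σ : ℕ → SignType, ‖u + ∑ j ∈ range n, (σ j : ℝ) • w j‖ ≤ C)
    {a : ℕ → ℝ} (ha : ∀ j, |a j| ≤ 1) : ‖u + ∑ j ∈ range n, a j • w j‖ ≤ C := by
  induction n generalizing u with
  | zero => simpa using hu 0
  | succ n ih =>
    have hlast : ∀ s : SignType, ‖u + (s : ℝ) • w n + ∑ j ∈ range n, a j • w j‖ ≤ C := by
      refine fun s => ih fun σ => ?_
      have h := hu (update σ n s)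
      rwa [sum_range_succ, update_self,
        sum_congr rfl fun j hj => by rw [update_of_ne (mem_range.mp hj).ne],
        add_comm _ ((s : ℝ) • w n), ← add_assoc] at h
    rw [sum_range_succ, ← add_assoc]
    refine (norm_add_smul_le_max _ _ (ha n)).trans (max_le ?_ ?_)
    · simpa [add_right_comm] using hlast 1
    · simpa [sub_add_eq_add_sub, ← sub_eq_add_neg] using hlast (-1)

namespace BoundedSignSums

variable {w : ℕ → E} {C : ℝ}

lemma nonneg (hw : BoundedSignSums w C) : 0 ≤ C := by
  simpa using hw 0 0

lemma norm_sum_smul_le (hw : BoundedSignSums w C) (F : Finset ℕ) {a : ℕ → ℝ} {s : ℝ}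
    (hs : 0 ≤ s) (ha : ∀ j ∈ F, |a j| ≤ s) : ‖∑ j ∈ F, a j • w j‖ ≤ C * s := by
  rcases hs.eq_or_lt with rfl | hs
  · rw [sum_eq_zero fun j hj => by rw [abs_nonpos_iff.mp (ha j hj), zero_smul]]
    simp
  have hF : F ⊆ range (F.sup id + 1) := fun j hj =>
    mem_range.mpr (Nat.lt_succ_of_le (le_sup (f := id) hj))
  let b : ℕ → ℝ := fun j => if j ∈ F then a j / s else 0
  have hb : ∀ j, |b j| ≤ 1 := fun j => by
    by_cases hj : j ∈ F
    · simpa [b, hj, abs_div, abs_of_pos hs, div_le_one hs] using ha j hj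
    · simp [b, hj]
  have hsum : ∑ j ∈ F, a j • w j = s • ∑ j ∈ range (F.sup id + 1), b j • w j := by
    rw [smul_sum, ← sum_subset hF fun j _ hj => by simp [b, hj]]
    refine sum_congr rfl fun j hj => ?_
    rw [smul_smul, mul_comm]
    simp [b, hj, div_mul_cancel₀ _ hs.ne']
  rw [hsum, norm_smul, Real.norm_of_nonneg hs.le, mul_comm C]
  gcongr
  simpa using norm_add_sum_range_smul_le_of_signs (w := w) (u := 0) _ (by simpa using hw _) hb

lemma norm_le (hw : BoundedSignSums w C) (k : ℕ) : ‖w k‖ ≤ C := by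
  simpa using hw.norm_sum_smul_le {k} (a := 1) zero_le_one (by simp)

lemma comp_injective (hw : BoundedSignSums w C) {n : ℕ → ℕ} (hn : Injective n) :
    BoundedSignSums (w ∘ n) C := by
  intro m σ
  have h := hw.norm_sum_smul_le ((range m).image n) (a := fun j => (σ (invFun n j) : ℝ))
    zero_le_one fun j _ => SignType.abs_coe_le_one _
  have hinv : ∀ i, invFun n (n i) = i := leftInverse_invFun hn
  rw [sum_image fun i _ j _ hij => hn hij, mul_one] at h
  simpa only [hinv, comp_apply] using h

lemma map {F : Type*} [SeminormedAddCommGroup F] [NormedSpace ℝ F] (hw : BoundedSignSums w C)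
    (f : E →ₗ[ℝ] F) (hf : ∀ x, ‖f x‖ ≤ ‖x‖) : BoundedSignSums (f ∘ w) C := by
  intro n σ
  simpa [map_sum, map_smul] using (hf _).trans (hw n σ)

lemma summable_abs_apply (hw : BoundedSignSums w C) (g : StrongDual ℝ E) :
    Summable fun j => |g (w j)| := by
  refine summable_of_sum_range_le (c := ‖g‖ * C) (fun _ => abs_nonneg _) fun n => ?_
  calc ∑ j ∈ range n, |g (w j)| = g (∑ j ∈ range n, (SignType.sign (g (w j)) : ℝ) • w j) := by
        simp [map_sum, sign_mul_self]
    _ ≤ ‖g‖ * C := (le_abs_self _).trans ((g.le_opNorm _).trans (by gcongr; exact hw _ _))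

lemma norm_le_of_forall_norm_sub_le (hw : BoundedSignSums w C) {n : ℕ → ℕ} (hn : Injective n)
    {b : E} {r : ℝ} (hb : ∀ i, ‖w (n i) - b‖ ≤ r) : ‖b‖ ≤ r := by
  refine le_of_forall_pos_le_add fun ε hε => ?_
  obtain ⟨m, hm⟩ := exists_nat_gt (C / ε)
  have hm0 : (0 : ℝ) < m := (div_nonneg hw.nonneg hε.le).trans_lt hm
  have key : m * ‖b‖ ≤ C + m * r := by
    calc m * ‖b‖ = ‖∑ i ∈ range m, (w (n i) - (w (n i) - b))‖ := by
          simp [sum_const, ← Nat.cast_smul_eq_nsmul ℝ, norm_smul]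
      _ ≤ ‖∑ i ∈ range m, w (n i)‖ + ∑ i ∈ range m, ‖w (n i) - b‖ := by
          rw [sum_sub_distrib]; exact (norm_sub_le _ _).trans (by gcongr; exact norm_sum_le _ _)
      _ ≤ C + m * r := by
          gcongr
          · simpa using (hw.comp_injective hn) m 1
          · simpa using sum_le_sum fun i (_ : i ∈ range m) => hb i
  rw [div_lt_iff₀ hε] at hm
  nlinarith

end BoundedSignSums

end SignSums

section GlidingHump

variable {E : Type*} [NormedAddCommGroup E] [NormedSpace ℝ E] {w : ℕ → E} {C δ : ℝ}

namespace BoundedSignSums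

lemma exists_le_norm_mkQ (hw : BoundedSignSums w C) (hδ : 0 < δ) (hlb : ∀ k, δ ≤ ‖w k‖)
    (E' : Submodule ℝ E) [FiniteDimensional ℝ E'] (N₀ : ℕ) :
    ∃ n, N₀ ≤ n ∧ δ / 8 ≤ ‖E'.mkQ (w n)‖ := by
  -- Otherwise points `e i ∈ E'` shadow the `w (N₀ + i)`; a limit point `b` of the `e i` is then
  -- close to infinitely many `w n`, which the bounded signed sums force to be small.
  by_contra! hsmall
  have hclose : ∀ i, ∃ e : E', ‖w (N₀ + i) - e‖ < δ / 8 := fun i => by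
    have hi := hsmall (N₀ + i) (Nat.le_add_right _ _)
    obtain ⟨m, hm, hmn⟩ := Submodule.Quotient.norm_mk_lt (E'.mkQ (w (N₀ + i))) (sub_pos.mpr hi)
    refine ⟨⟨w (N₀ + i) - m, (Submodule.Quotient.eq E').mp hm.symm⟩, ?_⟩
    simpa using hmn
  choose e he using hclose
  have hbdd : ∀ i, e i ∈ closedBall 0 (C + δ / 8) := fun i => by
    rw [mem_closedBall_zero_iff]
    calc ‖e i‖ = ‖(e i : E)‖ := rfl
      _ ≤ ‖w (N₀ + i)‖ + ‖w (N₀ + i) - e i‖ := by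
          rw [norm_sub_rev]; exact norm_le_norm_add_norm_sub' _ _
      _ ≤ C + δ / 8 := add_le_add (hw.norm_le _) (he i).le
  obtain ⟨b, -, ψ, hψ, hlim⟩ := tendsto_subseq_of_bounded isBounded_closedBall hbdd
  obtain ⟨i₀, hi₀⟩ := Metric.tendsto_atTop.mp hlim (δ / 8) (by positivity)
  have hfar : ∀ i, ‖w (N₀ + ψ (i₀ + i)) - b‖ ≤ δ / 4 := fun i => by
    have hb := hi₀ (i₀ + i) (Nat.le_add_right _ _)
    rw [comp_apply, dist_eq_norm, Submodule.coe_norm, Submodule.coe_sub] at hb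
    linarith [norm_sub_le_norm_sub_add_norm_sub (w (N₀ + ψ (i₀ + i))) (e (ψ (i₀ + i))) b,
      he (ψ (i₀ + i))]
  have hinj : Injective fun i => N₀ + ψ (i₀ + i) := fun i j hij =>
    Nat.add_left_cancel (hψ.injective (Nat.add_left_cancel hij))
  have hb := hw.norm_le_of_forall_norm_sub_le hinj hfar
  linarith [hlb (N₀ + ψ (i₀ + 0)), norm_le_norm_add_norm_sub' (w (N₀ + ψ (i₀ + 0))) (b : E),
    hfar 0]

lemma exists_peaking_functional (hw : BoundedSignSums w C) (hδ : 0 < δ) (hlb : ∀ k, δ ≤ ‖w k‖)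
    (s : Finset ℕ) (N₀ : ℕ) :
    ∃ (n : ℕ) (g : StrongDual ℝ E) (t : Finset ℕ), N₀ ≤ n ∧ ‖g‖ ≤ 1 ∧ δ / 8 ≤ g (w n) ∧
      (∀ m ∈ s, g (w m) = 0) ∧ ∀ t', Disjoint t' t → ∑ m ∈ t', |g (w m)| < δ / 8 / 2 := by
  classical
  let E' := Submodule.span ℝ ((s.image w : Finset E) : Set E)
  obtain ⟨n, hn, hfar⟩ := hw.exists_le_norm_mkQ hδ hlb E' N₀
  obtain ⟨g', hg'1, hg'2⟩ := exists_dual_vector'' ℝ (E'.mkQ (w n))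
  let g : StrongDual ℝ E := g'.comp E'.mkQL
  have hg : ‖g‖ ≤ 1 := g.opNorm_le_bound zero_le_one fun x =>
    calc ‖g' (E'.mkQ x)‖ ≤ 1 * ‖E'.mkQ x‖ := g'.le_of_opNorm_le hg'1 _
      _ ≤ 1 * ‖x‖ := by gcongr; exact Submodule.Quotient.norm_mk_le _ _
  obtain ⟨t, ht⟩ := summable_iff_vanishing_norm.mp (hw.summable_abs_apply g) (δ / 8 / 2)
    (by positivity)
  refine ⟨n, g, t, hn, hg, ?_, fun m hm => ?_, fun t' ht' => ?_⟩
  · change δ / 8 ≤ g' (E'.mkQ (w n))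
    rwa [hg'2]
  · have : E'.mkQ (w m) = 0 :=
      (Submodule.Quotient.mk_eq_zero E').mpr (Submodule.subset_span (by simpa using ⟨m, hm, rfl⟩))
    simp [g, this]
  · simpa [Real.norm_of_nonneg (sum_nonneg fun _ _ => abs_nonneg _)] using ht t' ht'

lemma exists_almost_biorthogonal (hw : BoundedSignSums w C) (hδ : 0 < δ)
    (hlb : ∀ k, δ ≤ ‖w k‖) :
    ∃ η > 0, ∃ (n : ℕ → ℕ) (g : ℕ → StrongDual ℝ E), Injective n ∧ (∀ i, ‖g i‖ ≤ 1) ∧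
      (∀ i, η ≤ g i (w (n i))) ∧ ∀ i F, i ∉ F → ∑ j ∈ F, |g i (w (n j))| ≤ η / 2 := by
  -- A triple `(n, g, t)` is an index, a functional peaking at `w n`, and a finite set off which
  -- `∑ |g (w m)|` is `< η / 2`; later indices avoid `t`, later functionals vanish at `w n`.
  let P : ℕ × StrongDual ℝ E × Finset ℕ → Prop := fun p =>
    ‖p.2.1‖ ≤ 1 ∧ δ / 8 ≤ p.2.1 (w p.1) ∧
      ∀ t, Disjoint t p.2.2 → ∑ m ∈ t, |p.2.1 (w m)| < δ / 8 / 2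
  let r : ℕ × StrongDual ℝ E × Finset ℕ → ℕ × StrongDual ℝ E × Finset ℕ → Prop := fun p q =>
    p.1 < q.1 ∧ q.1 ∉ p.2.2 ∧ q.2.1 (w p.1) = 0
  obtain ⟨f, hfP, hfr⟩ := exists_seq_of_forall_finset_exists P r fun s _ => by
    let bound : ℕ × StrongDual ℝ E × Finset ℕ → ℕ := fun p => max p.1 (p.2.2.sup id) + 1
    obtain ⟨n, g, t, hn, hg, hgn, hgs, ht⟩ :=
      hw.exists_peaking_functional hδ hlb (s.image Prod.fst) (s.sup bound)
    refine ⟨(n, g, t), ⟨hg, hgn, ht⟩, fun p hp => ?_⟩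
    have hpn : max p.1 (p.2.2.sup id) + 1 ≤ n := (le_sup (f := bound) hp).trans hn
    refine ⟨by omega, fun hnp => ?_, hgs _ (mem_image_of_mem _ hp)⟩
    have := le_sup (f := id) hnp
    simp only [id] at this
    omega
  have hinj : Injective fun i => (f i).1 := StrictMono.injective fun i j hij => (hfr i j hij).1
  refine ⟨δ / 8, by positivity, fun i => (f i).1, fun i => (f i).2.1, hinj, fun i => (hfP i).1,
    fun i => (hfP i).2.1, fun i F hiF => ?_⟩
  rw [← sum_filter_of_ne (p := (i < ·)) fun j hj hne => ?_]
  · beta_reduce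
    rw [← sum_image (f := fun m => |(f i).2.1 (w m)|) (g := fun j => (f j).1)
      fun j _ k _ hjk => hinj hjk]
    refine ((hfP i).2.2 _ (disjoint_left.mpr fun m hm hmi => ?_)).le
    obtain ⟨j, hj, rfl⟩ := mem_image.mp hm
    exact (hfr i j (mem_filter.mp hj).2).2.1 hmi
  · refine lt_of_le_of_ne (not_lt.mp fun hji => hne ?_) (fun h => hiF (h ▸ hj))
    rw [(hfr j i hji).2.2, abs_zero]

end BoundedSignSums

end GlidingHump

section C0Copy

open scoped ZeroAtInfty

lemma ZeroAtInftyContinuousMap.abs_apply_le_norm (a : C₀(ℕ, ℝ)) (k : ℕ) : |a k| ≤ ‖a‖ := by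
  simpa [← norm_toBCF_eq_norm] using a.toBCF.norm_coe_le_norm k

lemma ZeroAtInftyContinuousMap.norm_le_of_forall_abs_le (a : C₀(ℕ, ℝ)) {C : ℝ} (hC : 0 ≤ C)
    (h : ∀ k, |a k| ≤ C) : ‖a‖ ≤ C := by
  simpa [← norm_toBCF_eq_norm] using (a.toBCF.norm_le hC).mpr h

lemma ZeroAtInftyContinuousMap.finite_setOf_le_abs (a : C₀(ℕ, ℝ)) {r : ℝ} (hr : 0 < r) :
    {k | r ≤ |a k|}.Finite := by
  have h := Metric.tendsto_nhds.mp (cocompact_eq_cofinite ℕ ▸ zero_at_infty a) r hr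
  simpa [Real.dist_0_eq_abs, not_lt] using eventually_cofinite.mp h

namespace BoundedSignSums

variable {E : Type*} [NormedAddCommGroup E] [NormedSpace ℝ E] [CompleteSpace E]
  {v : ℕ → E} {C : ℝ}

lemma summable_smul (hv : BoundedSignSums v C) (a : C₀(ℕ, ℝ)) :
    Summable fun k => a k • v k := by
  refine summable_iff_vanishing_norm.mpr fun ε hε => ?_
  have hC := hv.nonneg
  have hr : 0 < ε / (C + 1) := div_pos hε (by linarith)
  have hfin := a.finite_setOf_le_abs hr
  refine ⟨hfin.toFinset, fun t ht => ?_⟩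
  calc ‖∑ k ∈ t, a k • v k‖ ≤ C * (ε / (C + 1)) := hv.norm_sum_smul_le t hr.le fun k hk =>
        (not_le.mp fun h => disjoint_left.mp ht hk (hfin.mem_toFinset.mpr h)).le
    _ < ε := by
        rw [mul_div_assoc', div_lt_iff₀ (by linarith)]
        nlinarith

lemma norm_tsum_smul_le (hv : BoundedSignSums v C) (a : C₀(ℕ, ℝ)) :
    ‖∑' k, a k • v k‖ ≤ C * ‖a‖ :=
  le_of_tendsto' (hv.summable_smul a).hasSum.norm fun F =>
    hv.norm_sum_smul_le F (norm_nonneg a) fun k _ => a.abs_apply_le_norm k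

noncomputable def seriesCLM (hv : BoundedSignSums v C) : C₀(ℕ, ℝ) →L[ℝ] E :=
  LinearMap.mkContinuous
    { toFun := fun a => ∑' k, a k • v k
      map_add' := fun a b => by
        simp only [ZeroAtInftyContinuousMap.coe_add, Pi.add_apply, add_smul]
        exact (hv.summable_smul a).tsum_add (hv.summable_smul b)
      map_smul' := fun c a => by
        simp only [ZeroAtInftyContinuousMap.coe_smul, Pi.smul_apply, smul_eq_mul, mul_smul,
          RingHom.id_apply]
        exact (hv.summable_smul a).tsum_const_smul c }
    C hv.norm_tsum_smul_le

variable {g : ℕ → StrongDual ℝ E} {η : ℝ}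

lemma mul_abs_apply_le_norm_seriesCLM (hv : BoundedSignSums v C) (hg : ∀ i, ‖g i‖ ≤ 1)
    (hgv : ∀ i, η ≤ g i (v i)) (hoff : ∀ i F, i ∉ F → ∑ j ∈ F, |g i (v j)| ≤ η / 2)
    (a : C₀(ℕ, ℝ)) (k : ℕ) : η * |a k| ≤ ‖hv.seriesCLM a‖ + η / 2 * ‖a‖ := by
  have hpartial : ∀ n, k < n → η * |a k| ≤ ‖∑ j ∈ range n, a j • v j‖ + η / 2 * ‖a‖ := by
    intro n hn
    set S := ∑ j ∈ range n, a j • v j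
    have hrest : |∑ j ∈ (range n).erase k, a j * g k (v j)| ≤ η / 2 * ‖a‖ :=
      calc |∑ j ∈ (range n).erase k, a j * g k (v j)|
          ≤ ∑ j ∈ (range n).erase k, ‖a‖ * |g k (v j)| := (abs_sum_le_sum_abs _ _).trans <|
            sum_le_sum fun j _ => by rw [abs_mul]; gcongr; exact a.abs_apply_le_norm j
        _ ≤ η / 2 * ‖a‖ := by
            rw [← mul_sum, mul_comm]; gcongr; exact hoff k _ (notMem_erase k _)
    have hgS : g k S = ∑ j ∈ (range n).erase k, a j * g k (v j) + a k * g k (v k) := by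
      simp only [S, map_sum, map_smul, smul_eq_mul]
      exact (sum_erase_add _ _ (mem_range.mpr hn)).symm
    calc η * |a k| ≤ |a k * g k (v k)| := by
          rw [abs_mul, mul_comm]; gcongr; exact (hgv k).trans (le_abs_self _)
      _ ≤ |g k S| + |∑ j ∈ (range n).erase k, a j * g k (v j)| := by
          rw [hgS]
          simpa using abs_sub (∑ j ∈ (range n).erase k, a j * g k (v j) + a k * g k (v k))
            (∑ j ∈ (range n).erase k, a j * g k (v j))
      _ ≤ ‖S‖ + η / 2 * ‖a‖ := by
          gcongr
          simpa using (g k).le_of_opNorm_le (hg k) S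
  exact ge_of_tendsto ((hv.summable_smul a).hasSum.tendsto_sum_nat.norm.add_const _)
    ((eventually_gt_atTop k).mono hpartial)

lemma norm_le_mul_norm_seriesCLM (hv : BoundedSignSums v C) (hη : 0 < η)
    (hg : ∀ i, ‖g i‖ ≤ 1) (hgv : ∀ i, η ≤ g i (v i))
    (hoff : ∀ i F, i ∉ F → ∑ j ∈ F, |g i (v j)| ≤ η / 2) (a : C₀(ℕ, ℝ)) :
    ‖a‖ ≤ 2 / η * ‖hv.seriesCLM a‖ := by
  have h := a.norm_le_of_forall_abs_le (C := ‖hv.seriesCLM a‖ / η + ‖a‖ / 2) (by positivity)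
    fun k => by
      calc |a k| = η * |a k| / η := by field_simp
        _ ≤ (‖hv.seriesCLM a‖ + η / 2 * ‖a‖) / η := by
            gcongr; exact hv.mul_abs_apply_le_norm_seriesCLM hg hgv hoff a k
        _ = ‖hv.seriesCLM a‖ / η + ‖a‖ / 2 := by field_simp
  calc ‖a‖ = 2 * (‖a‖ / 2) := by ring
    _ ≤ 2 * (‖hv.seriesCLM a‖ / η) := by linarith
    _ = 2 / η * ‖hv.seriesCLM a‖ := by ring

theorem exists_closed_subspace_equiv_c0 {w : ℕ → E} {δ : ℝ} (hw : BoundedSignSums w C)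
    (hδ : 0 < δ) (hlb : ∀ k, δ ≤ ‖w k‖) :
    ∃ W : Submodule ℝ E, IsClosed (W : Set E) ∧ Nonempty (W ≃L[ℝ] C₀(ℕ, ℝ)) := by
  obtain ⟨η, hη, n, g, hn, hg, hgv, hoff⟩ := hw.exists_almost_biorthogonal hδ hlb
  have hv := hw.comp_injective hn
  let T := hv.seriesCLM
  have hT : AntilipschitzWith (2 / η).toNNReal T := T.antilipschitz_of_bound fun a => by
    rw [Real.coe_toNNReal _ (by positivity)]
    exact hv.norm_le_mul_norm_seriesCLM hη hg hgv hoff a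
  have hclosed := hT.isClosed_range T.uniformContinuous
  exact ⟨(T : C₀(ℕ, ℝ) →ₗ[ℝ] E).range, by rwa [LinearMap.coe_range],
    ⟨(T.equivRange hT.injective hclosed).symm⟩⟩

end BoundedSignSums

end C0Copy

section AlmostSquare

variable {Y : Type*} [NormedAddCommGroup Y] [NormedSpace ℝ Y]

lemma norm_smul_inv_norm_smul (x : Y) : ‖x‖ • ‖x‖⁻¹ • x = x := by
  rcases eq_or_ne x 0 with rfl | hx
  · simp
  · rw [smul_smul, mul_inv_cancel₀ (norm_ne_zero_iff.mpr hx), one_smul]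

lemma IsASQ.exists_forall_mem_of_finite (hY : IsASQ Y) {ε : ℝ} (hε : 0 < ε) {S : Set Y}
    (hS : S.Finite) : ∃ z : Y, ‖z‖ = 1 ∧ ∀ y ∈ S, ‖‖y‖⁻¹ • y - z‖ ≤ 1 + ε := by
  let T := (fun y : Y => ‖y‖⁻¹ • y) '' (S \ {0})
  have : Finite T := (hS.sdiff.image _).to_subtype
  let e := Finite.equivFin T
  obtain ⟨z, hz, hzT⟩ := hY ε hε _ (fun i => (e.symm i : Y)) fun i => by
    obtain ⟨y, ⟨-, hy0⟩, hy⟩ := (e.symm i).2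
    rw [← hy]
    simpa using norm_smul_inv_norm (𝕜 := ℝ) hy0
  refine ⟨z, hz, fun y hy => ?_⟩
  rcases eq_or_ne y 0 with rfl | hy0
  · simp [hz, hε.le]
  · simpa only [Equiv.symm_apply_apply] using hzT (e ⟨_, y, ⟨hy, hy0⟩, rfl⟩)

lemma IsASQ.exists_extend_signSums (hY : IsASQ Y) {ε : ℝ} (hε : 0 < ε) {N : ℕ} (x : Fin N → Y)
    (hx : ∀ n, ‖x n‖ = 1) {k : ℕ} {v : ℕ → Y}
    (hv : ∀ σ : ℕ → SignType, ‖∑ j ∈ range k, (σ j : ℝ) • v j‖ ≤ 2 - 2⁻¹ ^ k) :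
    ∃ z, (‖z‖ = 1 ∧ ∀ n, ‖x n - z‖ ≤ 1 + ε) ∧ ∀ σ : ℕ → SignType,
      ‖∑ j ∈ range (k + 1), (σ j : ℝ) • update v k z j‖ ≤ 2 - 2⁻¹ ^ (k + 1) := by
  let S : Set Y := Set.range x ∪ Set.range fun σ : Fin k → SignType => ∑ i, (σ i : ℝ) • v i
  have hmem : ∀ σ : ℕ → SignType, ∑ j ∈ range k, (σ j : ℝ) • v j ∈ S := fun σ =>
    Or.inr ⟨fun i => σ i, (sum_range fun j => (σ j : ℝ) • v j).symm⟩
  -- Almost square also against every normalized signed sum of `v 0, …, v (k - 1)`, so that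
  -- appending `± z` multiplies the bound on signed sums by at most `1 + 2⁻¹ ^ (k + 2)`.
  set ε' := min ε (2⁻¹ ^ (k + 2))
  obtain ⟨z, hz, hzS⟩ := hY.exists_forall_mem_of_finite (ε := ε') (lt_min hε (by positivity))
    (S := S) ((Set.finite_range x).union (Set.finite_range _))
  refine ⟨z, ⟨hz, fun n => ?_⟩, fun σ => ?_⟩
  · have := hzS _ (Or.inl ⟨n, rfl⟩)
    rw [hx n, inv_one, one_smul] at this
    exact this.trans (by gcongr; exact min_le_left _ _)
  set V := ∑ j ∈ range k, (σ j : ℝ) • v j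
  rw [sum_range_succ, update_self,
    sum_congr rfl fun j hj => by rw [update_of_ne (mem_range.mp hj).ne]]
  have hadd : ‖‖V‖⁻¹ • V + z‖ ≤ 1 + ε' := by
    have h := hzS (-V) (by simpa [V, ← sum_neg_distrib, SignType.coe_neg] using hmem (-σ))
    rwa [norm_neg, smul_neg, ← norm_neg, neg_sub, sub_neg_eq_add, add_comm] at h
  have hstep := norm_smul_add_smul_le_mul_max hadd (hzS V (hmem σ)) (norm_nonneg V)
    (SignType.abs_coe_le_one (σ k))
  rw [norm_smul_inv_norm_smul] at hstep
  have ht : (2⁻¹ : ℝ) ^ k ≤ 1 := pow_le_one₀ (by norm_num) (by norm_num)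
  have hmax : max ‖V‖ 1 ≤ 2 - 2⁻¹ ^ k := max_le (hv σ) (by linarith)
  have hε' : ε' ≤ 2⁻¹ ^ k / 4 := (min_le_right _ _).trans_eq (by ring)
  calc _ ≤ (1 + ε') * max ‖V‖ 1 := hstep
    _ ≤ (1 + 2⁻¹ ^ k / 4) * (2 - 2⁻¹ ^ k) := by gcongr
    _ ≤ 2 - 2⁻¹ ^ (k + 1) := by rw [pow_succ]; nlinarith [pow_pos (by norm_num : (0 : ℝ) < 2⁻¹) k]

lemma IsASQ.exists_seq_boundedSignSums (hY : IsASQ Y) {ε : ℝ} (hε : 0 < ε) {N : ℕ} (x : Fin N → Y)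
    (hx : ∀ n, ‖x n‖ = 1) :
    ∃ z : ℕ → Y, (∀ k, ‖z k‖ = 1 ∧ ∀ n, ‖x n - z k‖ ≤ 1 + ε) ∧ BoundedSignSums z 2 := by
  obtain ⟨z, hz, hsums⟩ := exists_seq_of_forall_exists_update
    (fun a : Y => ‖a‖ = 1 ∧ ∀ n, ‖x n - a‖ ≤ 1 + ε)
    (fun k v => ∀ σ : ℕ → SignType, ‖∑ j ∈ range k, (σ j : ℝ) • v j‖ ≤ 2 - 2⁻¹ ^ k)
    (fun k v v' hvv' hv σ => by
      rw [← sum_congr rfl fun j hj => by rw [← hvv' j (mem_range.mp hj)]]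
      exact hv σ)
    0 (by norm_num) fun k v hv => hY.exists_extend_signSums hε x hx hv
  exact ⟨z, hz, fun n σ =>
    (hsums n σ).trans (by linarith [pow_pos (by norm_num : (0 : ℝ) < 2⁻¹) n])⟩

end AlmostSquare

theorem asq_subspace_quotient_no_c0
    (Y : Type*) [NormedAddCommGroup Y] [NormedSpace ℝ Y] [CompleteSpace Y]
    (hY : IsASQ Y) (X : Subspace ℝ Y) (hXc : IsClosed (X : Set Y))
    (hq : ∀ W : Subspace ℝ (Y ⧸ X), IsClosed (W : Set (Y ⧸ X)) → ¬ Nonempty (W ≃L[ℝ] ZeroAtInftyContinuousMap ℕ ℝ)) :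
    IsASQ X := by
  -- as an instance: it makes `Y ⧸ X` a normed, not merely seminormed, space
  have : IsClosed (X : Set Y) := hXc
  intro ε hε N y hy
  obtain ⟨δ, hδ, hδ1, hδε⟩ : ∃ δ : ℝ, 0 < δ ∧ δ < 1 ∧ 3 * δ ≤ ε :=
    ⟨min ε 1 / 3, by positivity, by linarith [min_le_right ε 1], by linarith [min_le_left ε 1]⟩
  obtain ⟨z, hz, hsums⟩ := hY.exists_seq_boundedSignSums hδ (fun n => (y n : Y)) hy
  obtain ⟨k, hk⟩ : ∃ k, ‖X.mkQ (z k)‖ < δ := by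
    by_contra! hlb
    obtain ⟨W, hW, hWc₀⟩ := (hsums.map X.mkQ fun _ => Submodule.Quotient.norm_mk_le _ _)
      |>.exists_closed_subspace_equiv_c0 hδ hlb
    exact hq W hW hWc₀
  obtain ⟨m, hm, hmδ⟩ := Submodule.Quotient.norm_mk_lt (X.mkQ (z k)) (sub_pos.mpr hk)
  let x₀ : X := ⟨z k - m, (Submodule.Quotient.eq X).mp hm.symm⟩
  have hx₀ : ‖(x₀ : Y) - z k‖ < δ := by simpa [x₀] using hmδ
  have hx₀0 : x₀ ≠ 0 := fun h => by
    simp only [h, ZeroMemClass.coe_zero, zero_sub, norm_neg, (hz k).1] at hx₀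
    linarith
  refine ⟨‖x₀‖⁻¹ • x₀, by simpa using norm_smul_inv_norm (𝕜 := ℝ) hx₀0, fun n => ?_⟩
  have h := norm_sub_inv_norm_smul_le_add (x₀ : Y) (y n) (hz k).1
  have : ‖(y n : Y) - z k‖ ≤ 1 + δ := (hz k).2 n
  change ‖(y n : Y) - ‖(x₀ : Y)‖⁻¹ • (x₀ : Y)‖ ≤ 1 + ε
  linarith
end

section
/- A Banach space Y is almost square if and only if every closed subspace of finite codimension in Y is almost square. -/
open TopologicalSpace Metric

section Aux

variable {Y : Type*} [NormedAddCommGroup Y] [NormedSpace ℝ Y]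

lemma asq_finset (hY : IsASQ Y) {δ : ℝ} (hδ : 0 < δ) (s : Finset Y)
    (hs : ∀ u ∈ s, ‖u‖ = 1) :
    ∃ z : Y, ‖z‖ = 1 ∧ ∀ u ∈ s, ‖u - z‖ ≤ 1 + δ := by
  have e := s.equivFin
  obtain ⟨z, hz1, hz2⟩ := hY δ hδ s.card (fun k => ((e.symm k : s) : Y))
    (fun k => hs _ (e.symm k).2)
  refine ⟨z, hz1, fun u hu => ?_⟩
  have := hz2 (e ⟨u, hu⟩)
  simpa using this

/-- A simple real inequality used below. -/
lemma aux_ineq {t δ : ℝ} (ht : 0 ≤ t) (ht' : t ≤ 1 + δ) (hδ : 0 < δ) (hδ1 : δ ≤ 1) :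
    t * (1 + δ) + |t - 1| ≤ 1 + 4 * δ := by
  rcases abs_cases (t - 1) with ⟨h, _⟩ | ⟨h, _⟩ <;> rw [h] <;> nlinarith

/-- Iteratively construct the "c₀-like" sequence of unit vectors. -/
lemma exists_seq (hY : IsASQ Y) {δ : ℝ} (hδ : 0 < δ) (hδ1 : δ ≤ 1)
    {N : ℕ} (x : Fin N → Y) (hx : ∀ n, ‖x n‖ = 1) (m : ℕ) :
    ∃ z : ℕ → Y, ∀ i < m, ‖z i‖ = 1 ∧ (∀ n, ‖x n + z i‖ ≤ 1 + δ) ∧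
      ∀ j < i, (‖z j + z i‖ ≤ 1 + δ ∧ ‖z j - z i‖ ≤ 1 + δ) ∧
        ∀ n, ‖x n + z j - z i‖ ≤ 1 + 4 * δ := by
  classical
  induction m with
  | zero => exact ⟨fun _ => 0, fun i hi => absurd hi (Nat.not_lt_zero i)⟩
  | succ m ih =>
    obtain ⟨z, hz⟩ := ih
    -- the finite set of unit vectors to which we apply almost squareness
    obtain ⟨s₀, hs₀⟩ : ∃ s₀ : Finset Y, s₀ =
        ((Finset.univ : Finset (Fin N)).image fun n => -(x n)) ∪
        ((Finset.range m).image fun j => -(z j)) ∪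
        ((Finset.range m).image fun j => z j) ∪
        (((Finset.univ : Finset (Fin N)) ×ˢ Finset.range m).image
          fun p => ‖x p.1 + z p.2‖⁻¹ • (x p.1 + z p.2)) := ⟨_, rfl⟩
    have hs : ∀ u ∈ s₀.erase 0, ‖u‖ = 1 := by
      intro u hu
      obtain ⟨hu0, hu'⟩ := Finset.mem_erase.mp hu
      rw [hs₀] at hu'
      simp only [Finset.mem_union, Finset.mem_image, Finset.mem_range,
        Finset.mem_product, Finset.mem_univ, true_and] at hu'
      rcases hu' with ((⟨n, _, rfl⟩ | ⟨j, hj, rfl⟩) | ⟨j, hj, rfl⟩) | ⟨p, hp, rfl⟩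
      · rw [norm_neg]; exact hx n
      · rw [norm_neg]; exact (hz j hj).1
      · exact (hz j hj).1
      · have hne : x p.1 + z p.2 ≠ 0 := by
          intro h0; apply hu0; rw [h0]; simp
        rw [norm_smul, norm_inv, norm_norm, inv_mul_cancel₀ (norm_ne_zero_iff.mpr hne)]
    obtain ⟨w, hw1, hw2⟩ := asq_finset hY hδ (s₀.erase 0) hs
    have hmem : ∀ u : Y, ‖u‖ = 1 → u ∈ s₀ → ‖u - w‖ ≤ 1 + δ := by
      intro u hu hu'
      refine hw2 u (Finset.mem_erase.mpr ⟨?_, hu'⟩)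
      intro h; rw [h] at hu; simp at hu
    refine ⟨fun k => if k = m then w else z k, fun i hi => ?_⟩
    dsimp only
    rcases Nat.lt_succ_iff_lt_or_eq.mp hi with hi' | heq
    · have hzi : (if i = m then w else z i) = z i := if_neg hi'.ne
      refine ⟨by rw [hzi]; exact (hz i hi').1,
        fun n => by rw [hzi]; exact (hz i hi').2.1 n, fun j hj => ?_⟩
      have hzj : (if j = m then w else z j) = z j := if_neg (hj.trans hi').ne
      rw [hzi, hzj]
      exact (hz i hi').2.2 j hj
    · subst heq
      simp only [↓reduceIte]
      refine ⟨hw1, ?_, ?_⟩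
      · intro n
        have h1 : -(x n) ∈ s₀ := by
          rw [hs₀]
          simp only [Finset.mem_union, Finset.mem_image, Finset.mem_univ, true_and]
          exact Or.inl (Or.inl (Or.inl ⟨n, rfl⟩))
        have := hmem _ (by rw [norm_neg]; exact hx n) h1
        calc ‖x n + w‖ = ‖-(x n) - w‖ := by rw [show -(x n) - w = -(x n + w) by abel, norm_neg]
          _ ≤ 1 + δ := this
      · intro j hj
        rw [if_neg hj.ne]
        have hju : ‖z j‖ = 1 := (hz j hj).1
        refine ⟨⟨?_, ?_⟩, ?_⟩
        · have h1 : -(z j) ∈ s₀ := by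
            rw [hs₀]
            simp only [Finset.mem_union, Finset.mem_image, Finset.mem_range]
            exact Or.inl (Or.inl (Or.inr ⟨j, hj, rfl⟩))
          have := hmem _ (by rw [norm_neg]; exact hju) h1
          calc ‖z j + w‖ = ‖-(z j) - w‖ := by
                rw [show -(z j) - w = -(z j + w) by abel, norm_neg]
            _ ≤ 1 + δ := this
        · have h1 : z j ∈ s₀ := by
            rw [hs₀]
            simp only [Finset.mem_union, Finset.mem_image, Finset.mem_range]
            exact Or.inl (Or.inr ⟨j, hj, rfl⟩)
          exact hmem _ hju h1
        · intro n
          obtain ⟨u, hu⟩ : ∃ u : Y, u = x n + z j := ⟨_, rfl⟩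
          rw [← hu]
          have hule : ‖u‖ ≤ 1 + δ := by rw [hu]; exact (hz j hj).2.1 n
          by_cases hu0 : u = 0
          · rw [hu0, zero_sub, norm_neg, hw1]; linarith
          · have hc : (0 : ℝ) < ‖u‖ := norm_pos_iff.mpr hu0
            have h1 : ‖u‖⁻¹ • u ∈ s₀ := by
              rw [hs₀]
              simp only [Finset.mem_union, Finset.mem_image, Finset.mem_product,
                Finset.mem_univ, Finset.mem_range, true_and]
              exact Or.inr ⟨(n, j), hj, by rw [hu]⟩
            have h2 : ‖‖u‖⁻¹ • u‖ = 1 := by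
              rw [norm_smul, norm_inv, norm_norm, inv_mul_cancel₀ hc.ne']
            have h3 : ‖‖u‖⁻¹ • u - w‖ ≤ 1 + δ := hmem _ h2 h1
            have h4 : ‖u - ‖u‖ • w‖ ≤ ‖u‖ * (1 + δ) := by
              have heq : u - ‖u‖ • w = ‖u‖ • (‖u‖⁻¹ • u - w) := by
                rw [smul_sub, smul_inv_smul₀ hc.ne']
              rw [heq, norm_smul, norm_norm]
              exact mul_le_mul_of_nonneg_left h3 hc.le
            have h5 : ‖‖u‖ • w - w‖ = |‖u‖ - 1| := by
              rw [show ‖u‖ • w - w = (‖u‖ - 1) • w by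
                rw [sub_smul, one_smul], norm_smul, hw1, mul_one, Real.norm_eq_abs]
            calc ‖u - w‖ = ‖(u - ‖u‖ • w) + (‖u‖ • w - w)‖ := by
                  congr 1; abel
              _ ≤ ‖u - ‖u‖ • w‖ + ‖‖u‖ • w - w‖ := norm_add_le _ _
              _ ≤ ‖u‖ * (1 + δ) + |‖u‖ - 1| := by rw [h5]; linarith
              _ ≤ 1 + 4 * δ := aux_ineq hc.le hule hδ hδ1

end Aux

theorem asq_iff_finite_codim_subspaces
    (Y : Type*) [NormedAddCommGroup Y] [NormedSpace ℝ Y] [CompleteSpace Y] :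
    IsASQ Y ↔ ∀ X : Subspace ℝ Y, IsClosed (X : Set Y) →
      FiniteDimensional ℝ (Y ⧸ X) → IsASQ X := by
  constructor
  · intro hY X hX hfd ε hε N x hx
    haveI := hX
    haveI := hfd
    -- the parameter
    obtain ⟨δ, hδdef⟩ : ∃ δ : ℝ, δ = min (ε / 7) (1 / 4) := ⟨_, rfl⟩
    have hδ : 0 < δ := hδdef ▸ lt_min (by linarith) (by norm_num)
    have hδ14 : δ ≤ 1 / 4 := hδdef ▸ min_le_right _ _
    have hδ1 : δ ≤ 1 := by linarith
    have hδε : 7 * δ ≤ ε := by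
      have h := hδdef ▸ min_le_left (ε / 7) (1 / 4)
      linarith
    -- compactness: a finite δ/2-net of the ball in the quotient
    have hcompact : IsCompact (closedBall (0 : Y ⧸ X) 2) := isCompact_closedBall _ _
    obtain ⟨t, htfin, hcover⟩ :=
      (Metric.totallyBounded_iff).mp hcompact.totallyBounded (δ / 2) (by linarith)
    haveI := htfin.fintype
    obtain ⟨m, hm⟩ : ∃ m : ℕ, m = htfin.toFinset.card + 1 := ⟨_, rfl⟩
    -- the sequence
    obtain ⟨z, hz⟩ := exists_seq hY hδ hδ1 (fun n => (x n : Y))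
      (fun n => by rw [show ‖(x n : Y)‖ = ‖x n‖ from rfl]; exact hx n) m
    -- pigeonhole in the quotient
    have hmemball : ∀ i : Fin m, (Submodule.Quotient.mk (z i) : Y ⧸ X) ∈
        closedBall (0 : Y ⧸ X) 2 := by
      intro i
      rw [mem_closedBall, dist_zero_right]
      calc ‖(Submodule.Quotient.mk (z i) : Y ⧸ X)‖ ≤ ‖z i‖ :=
            Submodule.Quotient.norm_mk_le X _
        _ = 1 := (hz i i.2).1
        _ ≤ 2 := by norm_num
    have hchoice : ∀ i : Fin m, ∃ c ∈ t,
        (Submodule.Quotient.mk (z i) : Y ⧸ X) ∈ ball c (δ / 2) := by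
      intro i
      have := hcover (hmemball i)
      simpa using this
    choose c hct hcb using hchoice
    have hcard : Fintype.card (htfin.toFinset : Finset (Y ⧸ X)) < Fintype.card (Fin m) := by
      rw [Fintype.card_coe, Fintype.card_fin]
      omega
    obtain ⟨a, b, hab, hfab⟩ := Fintype.exists_ne_map_eq_of_card_lt
      (fun i : Fin m => (⟨c i, htfin.mem_toFinset.mpr (hct i)⟩ :
        (htfin.toFinset : Finset (Y ⧸ X)))) hcard
    have hcab : c a = c b := congrArg Subtype.val hfab
    have hdist : dist (Submodule.Quotient.mk (z a) : Y ⧸ X)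
        (Submodule.Quotient.mk (z b) : Y ⧸ X) < δ := by
      calc dist (Submodule.Quotient.mk (z a) : Y ⧸ X) (Submodule.Quotient.mk (z b)) ≤
          dist (Submodule.Quotient.mk (z a) : Y ⧸ X) (c a) +
          dist (c b) (Submodule.Quotient.mk (z b) : Y ⧸ X) := by
            rw [hcab]; exact dist_triangle _ _ _
        _ < δ / 2 + δ / 2 := by
            have h1 := mem_ball.mp (hcb a)
            have h2 := mem_ball.mp (hcb b)
            rw [dist_comm (c b)]
            exact add_lt_add h1 h2
        _ = δ := by ring
    -- wlog : get indices j < i with small quotient distance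
    obtain ⟨i, j, hji, him, hijd⟩ : ∃ i j : ℕ, j < i ∧ i < m ∧
        dist (Submodule.Quotient.mk (z i) : Y ⧸ X)
          (Submodule.Quotient.mk (z j) : Y ⧸ X) < δ := by
      rcases lt_or_gt_of_ne (Fin.val_ne_of_ne hab) with h | h
      · exact ⟨b, a, h, b.2, by rw [dist_comm]; exact hdist⟩
      · exact ⟨a, b, h, a.2, hdist⟩
    obtain ⟨w, hw⟩ : ∃ w : Y, w = z i - z j := ⟨_, rfl⟩
    have hQw : ‖(Submodule.Quotient.mk w : Y ⧸ X)‖ < δ := by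
      have heq : (Submodule.Quotient.mk w : Y ⧸ X) =
          Submodule.Quotient.mk (z i) - Submodule.Quotient.mk (z j) := by
        rw [hw, Submodule.Quotient.mk_sub]
      rw [heq, ← dist_eq_norm]
      exact hijd
    -- find a vector v ∈ X close to w
    obtain ⟨v', hv'mk, hv'norm⟩ := Submodule.Quotient.norm_mk_lt
      (Submodule.Quotient.mk w : Y ⧸ X) (show 0 < δ - ‖(Submodule.Quotient.mk w : Y ⧸ X)‖
        by linarith)
    have hv'δ : ‖v'‖ < δ := by linarith
    obtain ⟨v, hv⟩ : ∃ v : Y, v = w - v' := ⟨_, rfl⟩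
    have hvX : v ∈ X := by
      have h1 : v' - w ∈ X := (Submodule.Quotient.eq X).mp hv'mk
      have h2 := X.neg_mem h1
      rw [hv]
      simpa using h2
    have hwv : ‖w - v‖ < δ := by
      rw [hv, show w - (w - v') = v' by abel]; exact hv'δ
    -- norm bounds on w and v
    have hzi1 : ‖z i‖ = 1 := (hz i him).1
    have hzj1 : ‖z j‖ = 1 := (hz j (hji.trans him)).1
    have hsum : ‖z j + z i‖ ≤ 1 + δ := ((hz i him).2.2 j hji).1.1
    have hdiff : ‖z j - z i‖ ≤ 1 + δ := ((hz i him).2.2 j hji).1.2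
    have hwub : ‖w‖ ≤ 1 + δ := by
      rw [hw, show z i - z j = -(z j - z i) by abel, norm_neg]; exact hdiff
    have hwlb : 1 - δ ≤ ‖w‖ := by
      have h2 : (2 : ℝ) = ‖(z j + z i) + (z i - z j)‖ := by
        rw [show (z j + z i) + (z i - z j) = (2 : ℝ) • z i by
          rw [two_smul]; abel]
        rw [norm_smul, hzi1]
        norm_num
      have h3 := norm_add_le (z j + z i) (z i - z j)
      rw [← h2] at h3
      rw [hw]
      linarith
    have hvub : ‖v‖ ≤ 1 + 2 * δ := by
      calc ‖v‖ = ‖w - (w - v)‖ := by rw [sub_sub_cancel]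
        _ ≤ ‖w‖ + ‖w - v‖ := norm_sub_le _ _
        _ ≤ 1 + 2 * δ := by linarith
    have hvlb : 1 - 2 * δ ≤ ‖v‖ := by
      have h := abs_le.mp (abs_norm_sub_norm_le w v)
      linarith [h.1]
    have hvpos : (0 : ℝ) < ‖v‖ := by linarith
    have hv0 : v ≠ 0 := norm_pos_iff.mp hvpos
    -- the final vector
    refine ⟨⟨‖v‖⁻¹ • v, X.smul_mem _ hvX⟩, ?_, ?_⟩
    · show ‖‖v‖⁻¹ • v‖ = 1
      exact norm_smul_inv_norm hv0
    · intro n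
      show ‖(x n : Y) - ‖v‖⁻¹ • v‖ ≤ 1 + ε
      have hD : ‖(x n : Y) + z j - z i‖ ≤ 1 + 4 * δ := ((hz i him).2.2 j hji).2 n
      have hxw : ‖(x n : Y) - w‖ ≤ 1 + 4 * δ := by
        rw [hw, show (x n : Y) - (z i - z j) = (x n : Y) + z j - z i by abel]
        exact hD
      have hnorm3 : ‖v - ‖v‖⁻¹ • v‖ ≤ 2 * δ := by
        have heq : v - ‖v‖⁻¹ • v = (1 - ‖v‖⁻¹) • v := by rw [sub_smul, one_smul]
        rw [heq, norm_smul, Real.norm_eq_abs]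
        have habs : |1 - ‖v‖⁻¹| * ‖v‖ = |(1 - ‖v‖⁻¹) * ‖v‖| := by
          rw [abs_mul, abs_of_pos hvpos]
        rw [habs, sub_mul, one_mul, inv_mul_cancel₀ hvpos.ne', abs_sub_le_iff]
        constructor <;> linarith
      calc ‖(x n : Y) - ‖v‖⁻¹ • v‖ =
          ‖(((x n : Y) - w) + (w - v)) + (v - ‖v‖⁻¹ • v)‖ := by congr 1; abel
        _ ≤ ‖((x n : Y) - w) + (w - v)‖ + ‖v - ‖v‖⁻¹ • v‖ := norm_add_le _ _
        _ ≤ ‖(x n : Y) - w‖ + ‖w - v‖ + ‖v - ‖v‖⁻¹ • v‖ := by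
            linarith [norm_add_le ((x n : Y) - w) (w - v)]
        _ ≤ (1 + 4 * δ) + δ + 2 * δ := by linarith
        _ = 1 + 7 * δ := by ring
        _ ≤ 1 + ε := by linarith
  · intro h
    haveI : Subsingleton (Y ⧸ (⊤ : Subspace ℝ Y)) :=
      Submodule.Quotient.subsingleton_iff.mpr rfl
    have htop := h ⊤ (by rw [Submodule.top_coe]; exact isClosed_univ)
      (by infer_instance)
    intro ε hε N y hy
    obtain ⟨z, hz1, hz2⟩ := htop ε hε N (fun n => ⟨y n, trivial⟩)
      (fun n => by rw [show ‖(⟨y n, trivial⟩ : (⊤ : Subspace ℝ Y))‖ = ‖y n‖ from rfl]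
                   exact hy n)
    refine ⟨(z : Y), hz1, fun n => ?_⟩
    exact hz2 n
end

section
/- A Banach space Y is octahedral if and only if every closed subspace of finite codimension in Y is octahedral. -/
open TopologicalSpace Metric

def IsOctahedral (Y : Type*) [NormedAddCommGroup Y] [NormedSpace ℝ Y] : Prop :=
  ∀ ε : ℝ, 0 < ε → ∀ N : ℕ, ∀ y : Fin N → Y, (∀ n, ‖y n‖ = 1) →
    ∃ z : Y, ‖z‖ = 1 ∧ ∀ n, ‖y n - z‖ ≥ 2 - ε

section Aux

variable {Y : Type*} [NormedAddCommGroup Y] [NormedSpace ℝ Y]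


lemma oct_finset (hY : IsOctahedral Y) {ε : ℝ} (hε : 0 < ε) (s : Finset Y)
    (h1 : ∀ u ∈ s, ‖u‖ = 1) :
    ∃ z : Y, ‖z‖ = 1 ∧ ∀ u ∈ s, ‖u - z‖ ≥ 2 - ε := by
  obtain ⟨z, hz1, hz2⟩ := hY ε hε s.card (fun i => ((s.equivFin.symm i : s) : Y))
    (fun i => h1 _ (s.equivFin.symm i).2)
  refine ⟨z, hz1, fun u hu => ?_⟩
  have := hz2 (s.equivFin ⟨u, hu⟩)
  simpa using this

lemma oct_compact (hY : IsOctahedral Y) {ε : ℝ} (hε : 0 < ε) {K : Set Y} (hK : IsCompact K)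
    (h1 : ∀ u ∈ K, ‖u‖ = 1) :
    ∃ z : Y, ‖z‖ = 1 ∧ ∀ u ∈ K, ‖u - z‖ ≥ 2 - ε := by
  obtain ⟨t, htK, htfin, hcov⟩ := hK.finite_cover_balls (half_pos hε)
  obtain ⟨z, hz1, hz2⟩ := oct_finset hY (half_pos hε) htfin.toFinset
    (fun u hu => h1 u (htK (htfin.mem_toFinset.mp hu)))
  refine ⟨z, hz1, fun u hu => ?_⟩
  obtain ⟨c, hc, huc⟩ := Set.mem_iUnion₂.mp (hcov hu)
  have h2 : ‖c - z‖ ≥ 2 - ε / 2 := hz2 c (htfin.mem_toFinset.mpr hc)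
  have h3 : ‖u - c‖ < ε / 2 := by simpa [dist_eq_norm] using huc
  have := norm_sub_le_norm_sub_add_norm_sub c z u
  have h4 : ‖c - z‖ ≤ ‖c - u‖ + ‖u - z‖ := norm_sub_le_norm_sub_add_norm_sub _ _ _
  rw [norm_sub_rev c u] at h4
  linarith



lemma norm_add_smul_ge (E : Submodule ℝ Y) {z : Y} (hz : ‖z‖ = 1) {η : ℝ} (hη : 0 ≤ η)
    (h : ∀ u ∈ E, ‖u‖ = 1 → ‖u - z‖ ≥ 2 - η) :
    ∀ u ∈ E, ∀ t : ℝ, |t| ≤ ‖u‖ → ‖u + t • z‖ ≥ (1 - η) * (‖u‖ + |t|) := by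
  intro u huE t ht
  rcases eq_or_ne u 0 with rfl | hu0
  · simp only [norm_zero] at ht
    have : t = 0 := abs_nonpos_iff.mp ht
    simp [this]
  have ha : (0:ℝ) < ‖u‖ := norm_pos_iff.mpr hu0
  set v : Y := ‖u‖⁻¹ • u with hv
  have hvE : v ∈ E := E.smul_mem _ huE
  have hv1 : ‖v‖ = 1 := by
    rw [hv, norm_smul, norm_inv, norm_norm, inv_mul_cancel₀ ha.ne']
  have hsign : ∀ σ : ℝ, |σ| = 1 → ‖v + σ • z‖ ≥ 2 - η := by
    intro σ hσ
    rcases abs_eq (by norm_num : (0:ℝ) ≤ 1) |>.mp hσ with rfl | rfl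
    · have h0 := h (-v) (E.neg_mem hvE) (by rw [norm_neg]; exact hv1)
      have e : -v - z = -(v + (1:ℝ) • z) := by rw [one_smul]; abel
      rw [e, norm_neg] at h0
      exact h0
    · have h0 := h v hvE hv1
      have e : v + (-1 : ℝ) • z = v - z := by rw [neg_one_smul]; abel
      rw [e]; exact h0
  rcases eq_or_ne t 0 with rfl | ht0
  · simp only [abs_zero, add_zero, zero_smul, add_zero]
    nlinarith [norm_nonneg u]
  set σ : ℝ := if 0 < t then 1 else -1 with hσdef
  have hσ1 : |σ| = 1 := by
    rcases lt_or_ge 0 t with h' | h'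
    · simp [hσdef, h']
    · simp [hσdef, h'.not_gt]
  have h2 : ‖(t / ‖u‖ - σ) • z‖ = 1 - |t| / ‖u‖ := by
    rw [norm_smul, hz, mul_one, Real.norm_eq_abs]
    rcases lt_or_ge 0 t with h' | h'
    · have hσe : σ = 1 := by simp [hσdef, h']
      have htabs : |t| = t := abs_of_pos h'
      rw [hσe, htabs]
      rw [abs_of_nonpos (by rw [sub_nonpos]; exact (div_le_one ha).mpr (htabs ▸ ht))]
      ring
    · have htneg : t < 0 := lt_of_le_of_ne h' ht0
      have hσe : σ = -1 := by simp [hσdef, h'.not_gt]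
      have htabs : |t| = -t := abs_of_neg htneg
      have hd : -t / ‖u‖ ≤ 1 := (div_le_one ha).mpr (htabs ▸ ht)
      rw [hσe, htabs]
      rw [abs_of_nonneg (by rw [sub_neg_eq_add]; rw [neg_div] at hd; linarith)]
      ring
  have key : ‖v + (t / ‖u‖) • z‖ ≥ 1 + |t| / ‖u‖ - η := by
    have h1 : ‖v + σ • z‖ ≥ 2 - η := hsign σ hσ1
    have e : v + (t / ‖u‖) • z = (v + σ • z) + ((t / ‖u‖ - σ) • z) := by
      rw [sub_smul]; abel
    have h4 : ‖v + σ • z‖ - ‖(t / ‖u‖ - σ) • z‖ ≤ ‖v + (t / ‖u‖) • z‖ := by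
      rw [e]
      have := norm_le_add_norm_add (v + σ • z) ((t / ‖u‖ - σ) • z)
      have hrev : ‖-((t / ‖u‖ - σ) • z)‖ = ‖(t / ‖u‖ - σ) • z‖ := norm_neg _
      linarith [norm_le_add_norm_add (v + σ • z) ((t / ‖u‖ - σ) • z)]
    rw [h2] at h4
    linarith
  have e2 : u + t • z = ‖u‖ • (v + (t / ‖u‖) • z) := by
    rw [smul_add, hv, smul_smul, smul_smul, mul_inv_cancel₀ ha.ne', one_smul,
      mul_div_cancel₀ _ ha.ne']
  rw [e2, norm_smul, Real.norm_eq_abs, abs_of_pos ha]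
  have hbound : ‖u‖ * (1 + |t| / ‖u‖ - η) ≤ ‖u‖ * ‖v + (t / ‖u‖) • z‖ :=
    mul_le_mul_of_nonneg_left key ha.le
  have expand : ‖u‖ * (1 + |t| / ‖u‖ - η) = ‖u‖ + |t| - η * ‖u‖ := by
    field_simp
  nlinarith [abs_nonneg t]

lemma exists_far (hY : IsOctahedral Y) (E : Submodule ℝ Y) [FiniteDimensional ℝ E]
    {η : ℝ} (hη : 0 < η) :
    ∃ z : Y, ‖z‖ = 1 ∧ ∀ u ∈ E, ∀ t : ℝ, |t| ≤ ‖u‖ →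
      ‖u + t • z‖ ≥ (1 - η) * (‖u‖ + |t|) := by
  set K : Set Y := ((↑) : E → Y) '' (sphere (0 : E) 1) with hK
  have hKc : IsCompact K := (isCompact_sphere (0 : E) 1).image continuous_subtype_val
  have hK1 : ∀ u ∈ K, ‖u‖ = 1 := by
    rintro u ⟨v, hv, rfl⟩
    simpa [mem_sphere_iff_norm] using hv
  obtain ⟨z, hz1, hz2⟩ := oct_compact hY hη hKc hK1
  refine ⟨z, hz1, norm_add_smul_ge E hz1 hη.le fun u huE hu1 => ?_⟩
  exact hz2 u ⟨⟨u, huE⟩, by simpa [mem_sphere_iff_norm] using hu1, rfl⟩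

lemma exists_seq_s15 (hY : IsOctahedral Y) {N : ℕ} (yc : Fin N → Y) {η : ℝ} (hη : 0 < η) (m : ℕ) :
    ∃ z : ℕ → Y, ∀ k < m, ‖z k‖ = 1 ∧
      ∀ u ∈ Submodule.span ℝ (Set.range yc ∪ z '' Set.Iio k), ∀ t : ℝ, |t| ≤ ‖u‖ →
        ‖u + t • z k‖ ≥ (1 - η) * (‖u‖ + |t|) := by
  induction m with
  | zero => exact ⟨fun _ => 0, fun k hk => absurd hk (Nat.not_lt_zero k)⟩
  | succ m ih =>
    obtain ⟨z, hz⟩ := ih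
    set E := Submodule.span ℝ (Set.range yc ∪ z '' Set.Iio m) with hE
    haveI : FiniteDimensional ℝ E :=
      FiniteDimensional.span_of_finite ℝ ((Set.finite_range yc).union ((Set.finite_Iio m).image z))
    obtain ⟨w, hw1, hw2⟩ := exists_far hY E hη
    refine ⟨Function.update z m w, fun k hk => ?_⟩
    have himg : ∀ k' ≤ m, Function.update z m w '' Set.Iio k' = z '' Set.Iio k' := by
      intro k' hk'
      apply Set.image_congr
      intro i hi
      have hi' : i < k' := Set.mem_Iio.mp hi
      exact Function.update_of_ne (Nat.ne_of_lt (lt_of_lt_of_le hi' hk')) w z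
    rcases Nat.lt_succ_iff_lt_or_eq.mp hk with h | rfl
    · rw [himg k h.le, Function.update_of_ne h.ne]
      exact hz k h
    · rw [himg k le_rfl, Function.update_self]
      exact ⟨hw1, hw2⟩

lemma pigeon (Z : Type*) [NormedAddCommGroup Z] [NormedSpace ℝ Z] [FiniteDimensional ℝ Z]
    {γ : ℝ} (hγ : 0 < γ) :
    ∃ m : ℕ, ∀ f : ℕ → Z, (∀ k < m, ‖f k‖ ≤ 1) →
      ∃ i j, i < j ∧ j < m ∧ ‖f i - f j‖ ≤ γ := by
  have hK : IsCompact (closedBall (0 : Z) 1) := isCompact_closedBall 0 1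
  obtain ⟨t, htK, htfin, hcov⟩ := hK.finite_cover_balls (half_pos hγ)
  refine ⟨htfin.toFinset.card + 1, fun f hf => ?_⟩
  set m := htfin.toFinset.card + 1 with hm
  have hsel : ∀ k ∈ Finset.range m, ∃ c ∈ htfin.toFinset, f k ∈ ball c (γ / 2) := by
    intro k hk
    have hk' : k < m := Finset.mem_range.mp hk
    have : f k ∈ closedBall (0 : Z) 1 := by
      simpa [mem_closedBall, dist_eq_norm] using hf k hk'
    obtain ⟨c, hc, hfc⟩ := Set.mem_iUnion₂.mp (hcov this)
    exact ⟨c, htfin.mem_toFinset.mpr hc, hfc⟩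
  classical
  choose! g hg1 hg2 using hsel
  have hcard : htfin.toFinset.card < (Finset.range m).card := by
    simp [hm]
  obtain ⟨a, ha, b, hb, hab, heq⟩ :=
    Finset.exists_ne_map_eq_of_card_lt_of_maps_to hcard hg1
  have hdist : ‖f a - f b‖ ≤ γ := by
    have h1 : dist (f a) (g a) < γ / 2 := mem_ball.mp (hg2 a ha)
    have h2 : dist (f b) (g b) < γ / 2 := mem_ball.mp (hg2 b hb)
    rw [← dist_eq_norm]
    calc dist (f a) (f b) ≤ dist (f a) (g a) + dist (g a) (f b) := dist_triangle _ _ _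
      _ = dist (f a) (g a) + dist (f b) (g b) := by rw [heq, dist_comm (g b) (f b)]
      _ ≤ γ := by linarith
  rcases lt_or_gt_of_ne hab with h | h
  · exact ⟨a, b, h, Finset.mem_range.mp hb, hdist⟩
  · exact ⟨b, a, h, Finset.mem_range.mp ha, by rwa [norm_sub_rev]⟩

end Aux

theorem octahedral_iff_finite_codim_subspaces
    (Y : Type*) [NormedAddCommGroup Y] [NormedSpace ℝ Y] [CompleteSpace Y] :
    IsOctahedral Y ↔ ∀ X : Subspace ℝ Y, IsClosed (X : Set Y) →
      FiniteDimensional ℝ (Y ⧸ X) → IsOctahedral X := by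
  constructor
  · intro hY X hXc hXf ε0 hε0 N y hy
    haveI := hXc
    haveI := hXf
    set ε : ℝ := min ε0 1 with hεdef
    have hε : 0 < ε := lt_min hε0 one_pos
    have hε1 : ε ≤ 1 := min_le_right _ _
    set γ : ℝ := ε / 8 with hγdef
    set η : ℝ := ε / 32 with hηdef
    have hγ : 0 < γ := by positivity
    have hη : 0 < η := by positivity
    obtain ⟨m, hm⟩ := pigeon (Y ⧸ X) hγ
    set yc : Fin N → Y := fun n => (y n : Y) with hyc
    have hyc1 : ∀ n, ‖yc n‖ = 1 := fun n => hy n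
    obtain ⟨z, hz⟩ := exists_seq_s15 hY yc hη m
    set f : ℕ → Y ⧸ X := fun k => Submodule.Quotient.mk (z k) with hf
    have hf1 : ∀ k < m, ‖f k‖ ≤ 1 := fun k hk =>
      le_trans (Submodule.Quotient.norm_mk_le X (z k)) (le_of_eq (hz k hk).1)
    obtain ⟨i, j, hij, hjm, hγij⟩ := hm f hf1
    have him : i < m := lt_trans hij hjm
    obtain ⟨hzi1, hzi2⟩ := hz i him
    obtain ⟨hzj1, hzj2⟩ := hz j hjm
    set Ej := Submodule.span ℝ (Set.range yc ∪ z '' Set.Iio j) with hEj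
    have hziEj : z i ∈ Ej := Submodule.subset_span (Or.inr ⟨i, Set.mem_Iio.mpr hij, rfl⟩)
    have hycEj : ∀ n, yc n ∈ Ej := fun n => Submodule.subset_span (Or.inl ⟨n, rfl⟩)
    set w : Y := (2:ℝ)⁻¹ • (z j - z i) with hw
    -- (F2) lower bound for ‖w‖
    have hwlow : ‖w‖ ≥ 1 - η := by
      have hu : -((2:ℝ)⁻¹ • z i) ∈ Ej := Ej.neg_mem (Ej.smul_mem _ hziEj)
      have hun : ‖-((2:ℝ)⁻¹ • z i)‖ = 2⁻¹ := by
        rw [norm_neg, norm_smul, hzi1, mul_one, Real.norm_eq_abs, abs_of_pos] <;> norm_num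
      have := hzj2 _ hu (2⁻¹ : ℝ) (by rw [hun, abs_of_pos] <;> norm_num)
      have he : -((2:ℝ)⁻¹ • z i) + (2:ℝ)⁻¹ • z j = w := by
        rw [hw, smul_sub]; abel
      rw [he, hun, abs_of_pos (by norm_num : (0:ℝ) < 2⁻¹)] at this
      calc ‖w‖ ≥ (1 - η) * (2⁻¹ + 2⁻¹) := this
        _ = 1 - η := by ring
    have hwhigh : ‖w‖ ≤ 1 := by
      rw [hw, norm_smul, Real.norm_eq_abs, abs_of_pos (by norm_num : (0:ℝ) < 2⁻¹)]
      have := norm_sub_le (z j) (z i)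
      rw [hzj1, hzi1] at this
      linarith
    -- (F4)
    have hyw : ∀ n, ‖yc n - w‖ ≥ 2 - 4 * η := by
      intro n
      have hycEi : yc n ∈ Submodule.span ℝ (Set.range yc ∪ z '' Set.Iio i) :=
        Submodule.subset_span (Or.inl ⟨n, rfl⟩)
      have h1 := hzi2 _ hycEi (2⁻¹ : ℝ)
        (by rw [hyc1 n, abs_of_pos] <;> norm_num)
      rw [hyc1 n, abs_of_pos (by norm_num : (0:ℝ) < 2⁻¹)] at h1
      set u2 : Y := yc n + (2:ℝ)⁻¹ • z i with hu2
      have hu2E : u2 ∈ Ej := Ej.add_mem (hycEj n) (Ej.smul_mem _ hziEj)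
      have hu2low : ‖u2‖ ≥ (1 - η) * (1 + 2⁻¹) := h1
      have hu2ge : |(-2⁻¹ : ℝ)| ≤ ‖u2‖ := by
        rw [abs_of_neg (by norm_num : (-2⁻¹ : ℝ) < 0)]
        have : η ≤ 1 / 32 := by rw [hηdef]; linarith
        nlinarith
      have h2 := hzj2 u2 hu2E (-2⁻¹ : ℝ) hu2ge
      have he : u2 + (-2⁻¹ : ℝ) • z j = yc n - w := by
        rw [hu2, hw, smul_sub, neg_smul]; abel
      rw [he, abs_of_neg (by norm_num : (-2⁻¹ : ℝ) < 0)] at h2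
      have : η ≤ 1 / 32 := by rw [hηdef]; linarith
      nlinarith
    -- (F5)
    have hmkw : ‖(Submodule.Quotient.mk w : Y ⧸ X)‖ ≤ γ / 2 := by
      have he : (Submodule.Quotient.mk w : Y ⧸ X) = (2:ℝ)⁻¹ • (f j - f i) := by
        rw [hw, hf]
        simp [Submodule.Quotient.mk_smul, Submodule.Quotient.mk_sub]
      rw [he, norm_smul, Real.norm_eq_abs, abs_of_pos (by norm_num : (0:ℝ) < 2⁻¹),
        norm_sub_rev]
      linarith
    -- (F6)
    obtain ⟨v, hv1, hv2⟩ := Submodule.Quotient.norm_mk_lt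
      (Submodule.Quotient.mk w : Y ⧸ X) (half_pos hγ)
    have hxmem : w - v ∈ X := by
      rw [← Submodule.Quotient.mk_eq_zero]
      rw [Submodule.Quotient.mk_sub, hv1, sub_self]
    set x : Y := w - v with hx
    have hwx : ‖w - x‖ ≤ γ := by
      rw [hx]
      have : w - (w - v) = v := by abel
      rw [this]
      linarith
    have habs := abs_norm_sub_norm_le w x
    rw [abs_le] at habs
    have hxlow : 1 - η - γ ≤ ‖x‖ := by linarith [habs.2]
    have hxhigh : ‖x‖ ≤ 1 + γ := by linarith [habs.1]
    have hxpos : 0 < ‖x‖ := by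
      have hη32 : η ≤ 1 / 32 := by rw [hηdef]; linarith
      have hγ8 : γ ≤ 1 / 8 := by rw [hγdef]; linarith
      linarith
    set ζ : X := ‖x‖⁻¹ • (⟨x, hxmem⟩ : X) with hζ
    have hζY : (ζ : Y) = ‖x‖⁻¹ • x := rfl
    have hζ1 : ‖ζ‖ = 1 := by
      have : ‖ζ‖ = ‖(ζ : Y)‖ := rfl
      rw [this, hζY, norm_smul, norm_inv, norm_norm, inv_mul_cancel₀ hxpos.ne']
    refine ⟨ζ, hζ1, fun n => ?_⟩
    have hcoe : ‖y n - ζ‖ = ‖yc n - (ζ : Y)‖ := rfl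
    rw [hcoe]
    have hxz : ‖x - (ζ : Y)‖ ≤ η + γ := by
      rw [hζY]
      have he : x - ‖x‖⁻¹ • x = (1 - ‖x‖⁻¹) • x := by
        rw [sub_smul, one_smul]
      rw [he, norm_smul, Real.norm_eq_abs]
      have : |1 - ‖x‖⁻¹| * ‖x‖ = |‖x‖ - 1| := by
        rw [← abs_of_pos hxpos, ← abs_mul]
        rw [abs_of_pos hxpos]
        congr 1
        field_simp
      rw [this]
      exact abs_le.mpr ⟨by linarith, by linarith⟩
    have htri : dist (yc n) w ≤ dist (yc n) (ζ : Y) + dist (ζ : Y) x + dist x w :=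
      dist_triangle4 _ _ _ _
    have hd1 : dist (ζ : Y) x = ‖x - (ζ : Y)‖ := by rw [dist_comm, dist_eq_norm]
    have hd2 : dist x w = ‖w - x‖ := by rw [dist_comm, dist_eq_norm]
    have hd3 : dist (yc n) w = ‖yc n - w‖ := dist_eq_norm _ _
    have hd4 : dist (yc n) (ζ : Y) = ‖yc n - (ζ : Y)‖ := dist_eq_norm _ _
    have hεle : ε ≤ ε0 := min_le_left _ _
    have hfin : ‖yc n - (ζ : Y)‖ ≥ 2 - 4 * η - (η + γ) - γ := by
      rw [← hd4]
      rw [hd1, hd2, hd3] at htri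
      linarith [hyw n]
    have : 5 * η + 2 * γ ≤ ε := by rw [hηdef, hγdef]; linarith
    linarith
  · intro h
    have hT : IsOctahedral ↥(⊤ : Subspace ℝ Y) := by
      refine h ⊤ (by rw [Submodule.top_coe]; exact isClosed_univ) ?_
      haveI : Subsingleton (Y ⧸ (⊤ : Subspace ℝ Y)) :=
        Submodule.Quotient.subsingleton_iff.mpr rfl
      infer_instance
    intro ε hε N y hy
    obtain ⟨z, hz1, hz2⟩ := hT ε hε N (fun n => ⟨y n, trivial⟩) (fun n => hy n)
    exact ⟨(z : Y), hz1, fun n => hz2 n⟩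
end

section
/- Let Y be an octahedral Banach space and X a closed subspace of Y such that the quotient Y/X contains no isomorphic copy of ℓ₁. Then X is octahedral. -/
open TopologicalSpace Metric

/-!
Octahedrality of `Y` gives, over the span `E` of the unit vectors `x₁, …, x_N` of `X`, a sequence
of unit vectors `y k` with `‖x + ∑ b k • y k‖ ≥ (1 - δ) (‖x‖ + ∑ |b k|)` for all `x ∈ E`. Either
the images of the `y k` in `Y ⧸ X` satisfy a lower `ℓ₁`-estimate, and then they span a copy of
`ℓ₁`, or some normalised combination `w = ∑ c k • y k` is `δ`-close to `X`. In the second case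
`w` is almost a unit vector at distance almost `2` from every `x n`, and normalising a point of
`X` near `w` gives the required unit vector of `X`.
-/

open scoped Pointwise lp

theorem exists_seq_forall_union_image_range {α : Type*} [DecidableEq α]
    (P : Finset α → ℕ → α → Prop) (h : ∀ s k, ∃ a, P s k a) (s₀ : Finset α) :
    ∃ y : ℕ → α, ∀ n, P (s₀ ∪ (Finset.range n).image y) n (y n) := by
  choose next hnext using h
  let T : ℕ → Finset α := fun n => Nat.rec s₀ (fun k T => insert (next T k) T) n
  have hT : ∀ n, T n = s₀ ∪ (Finset.range n).image fun k => next (T k) k := by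
    intro n
    induction n with
    | zero => simp [T]
    | succ n ih =>
      rw [Finset.range_add_one, Finset.image_insert, Finset.union_insert, ← ih]
  exact ⟨fun n => next (T n) n, fun n => hT n ▸ hnext _ _⟩

section LpOne

variable {ι Z : Type*} [NormedAddCommGroup Z] [NormedSpace ℝ Z] {s : ι → Z} {M : ℝ}

lemma lp.hasSum_norm_of_one (a : ℓ¹(ι, ℝ)) : HasSum (fun i => ‖a i‖) ‖a‖ := by
  simpa using lp.hasSum_norm (p := 1) (by norm_num) a

lemma lp.summable_norm_smul (hs : ∀ i, ‖s i‖ ≤ M) (a : ℓ¹(ι, ℝ)) :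
    Summable fun i => ‖a i • s i‖ :=
  .of_nonneg_of_le (fun _ => norm_nonneg _)
    (fun i => by rw [norm_smul]; exact mul_le_mul_of_nonneg_left (hs i) (norm_nonneg _))
    ((lp.hasSum_norm_of_one a).mul_right M).summable

variable [CompleteSpace Z]

variable (s) in
noncomputable def lp.linearCombination (hs : ∀ i, ‖s i‖ ≤ M) : ℓ¹(ι, ℝ) →L[ℝ] Z :=
  LinearMap.mkContinuous
    { toFun a := ∑' i, a i • s i
      map_add' a b := by
        simp only [lp.coeFn_add, Pi.add_apply, add_smul]
        exact (lp.summable_norm_smul hs a).of_norm.tsum_add (lp.summable_norm_smul hs b).of_norm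
      map_smul' r a := by
        simp only [lp.coeFn_smul, Pi.smul_apply, smul_eq_mul, ← smul_smul, RingHom.id_apply]
        exact (lp.summable_norm_smul hs a).of_norm.tsum_const_smul r }
    M fun a => by
      rw [mul_comm]
      refine (norm_tsum_le_tsum_norm (lp.summable_norm_smul hs a)).trans <|
        hasSum_le (fun i => ?_) (lp.summable_norm_smul hs a).hasSum
          ((lp.hasSum_norm_of_one a).mul_right M)
      rw [norm_smul]
      exact mul_le_mul_of_nonneg_left (hs i) (norm_nonneg _)

lemma lp.hasSum_linearCombination (hs : ∀ i, ‖s i‖ ≤ M) (a : ℓ¹(ι, ℝ)) :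
    HasSum (fun i => a i • s i) (lp.linearCombination s hs a) :=
  (lp.summable_norm_smul hs a).of_norm.hasSum

lemma lp.mul_norm_le_norm_linearCombination (hs : ∀ i, ‖s i‖ ≤ M) {c : ℝ}
    (hlow : ∀ (F : Finset ι) (a : ι → ℝ), c * ∑ i ∈ F, |a i| ≤ ‖∑ i ∈ F, a i • s i‖)
    (a : ℓ¹(ι, ℝ)) : c * ‖a‖ ≤ ‖lp.linearCombination s hs a‖ :=
  le_of_tendsto_of_tendsto' ((lp.hasSum_norm_of_one a).mul_left c)
    (lp.hasSum_linearCombination hs a).norm fun F => by simpa [Finset.mul_sum] using hlow F a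

theorem exists_isClosed_subspace_equiv_lpOne (hs : ∀ i, ‖s i‖ ≤ M) {c : ℝ} (hc : 0 < c)
    (hlow : ∀ (F : Finset ι) (a : ι → ℝ), c * ∑ i ∈ F, |a i| ≤ ‖∑ i ∈ F, a i • s i‖) :
    ∃ W : Subspace ℝ Z, IsClosed (W : Set Z) ∧ Nonempty (W ≃L[ℝ] ℓ¹(ι, ℝ)) := by
  set T := lp.linearCombination s hs
  have hT : AntilipschitzWith (Real.toNNReal c⁻¹) T := T.antilipschitz_of_bound fun a => by
    rw [Real.coe_toNNReal _ (by positivity), inv_mul_eq_div, le_div_iff₀ hc, mul_comm]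
    exact lp.mul_norm_le_norm_linearCombination hs hlow a
  have hclosed := hT.isClosed_range T.uniformContinuous
  refine ⟨(T : ℓ¹(ι, ℝ) →ₗ[ℝ] Z).range, ?_, ⟨(T.equivRange hT.injective hclosed).symm⟩⟩
  rwa [LinearMap.coe_range, ContinuousLinearMap.coe_coe]

end LpOne

section NormedSpace

variable {Y : Type*} [NormedAddCommGroup Y] [NormedSpace ℝ Y]

lemma norm_smul_add_smul_ge_of_norm_add_ge {u w : Y} {η α β : ℝ} (hu : ‖u‖ ≤ 1) (hw : ‖w‖ ≤ 1)
    (huw : 2 - η ≤ ‖u + w‖) (hη : 0 ≤ η) (hα : 0 ≤ α) (hβ : 0 ≤ β) :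
    (1 - η) * (α + β) ≤ ‖α • u + β • w‖ := by
  wlog hβα : β ≤ α generalizing u w α β
  · rw [add_comm u] at huw
    rw [add_comm (α • u), add_comm α]
    exact this hw hu huw hβ hα (le_of_not_ge hβα)
  have hsplit : α • (u + w) = (α • u + β • w) + (α - β) • w := by module
  have h := norm_add_le (α • u + β • w) ((α - β) • w)
  rw [← hsplit, norm_smul, norm_smul, Real.norm_of_nonneg hα,
    Real.norm_of_nonneg (sub_nonneg.2 hβα)] at h
  nlinarith [mul_le_mul_of_nonneg_left hw (sub_nonneg.2 hβα)]

lemma IsOctahedral.exists_far_of_finite (hY : IsOctahedral Y) {S : Set Y} (hS : S.Finite)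
    (hS1 : ∀ s ∈ S, ‖s‖ = 1) {ε : ℝ} (hε : 0 < ε) :
    ∃ z : Y, ‖z‖ = 1 ∧ ∀ s ∈ S, 2 - ε ≤ ‖s - z‖ := by
  obtain ⟨N, f, rfl⟩ := hS.fin_embedding
  obtain ⟨z, hz, hfar⟩ := hY ε hε N f fun n => hS1 _ ⟨n, rfl⟩
  exact ⟨z, hz, by simpa using hfar⟩

theorem IsOctahedral.exists_norm_add_smul_ge (hY : IsOctahedral Y) (E : Submodule ℝ Y)
    [FiniteDimensional ℝ E] {η : ℝ} (hη : 0 < η) :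
    ∃ z : Y, ‖z‖ = 1 ∧ ∀ e ∈ E, ∀ t : ℝ, (1 - η) * (‖e‖ + |t|) ≤ ‖e + t • z‖ := by
  have hK : IsCompact (((↑) : E → Y) '' sphere 0 1) :=
    (isCompact_sphere 0 1).image continuous_subtype_val
  obtain ⟨C, hCK, hC, hKC⟩ := finite_cover_balls_of_compact hK (half_pos hη)
  have hC1 : ∀ c ∈ C, ‖c‖ = 1 := by
    intro c hc
    obtain ⟨e, he, rfl⟩ := hCK hc
    simpa using he
  obtain ⟨z, hz, hfar⟩ := hY.exists_far_of_finite (hC.union hC.neg)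
    (by rintro s (hs | hs); exacts [hC1 s hs, by simpa using hC1 _ hs]) (half_pos hη)
  refine ⟨z, hz, fun e he t => ?_⟩
  rcases eq_or_ne e 0 with rfl | he0
  · rw [norm_zero, zero_add, zero_add, norm_smul, hz, Real.norm_eq_abs]
    nlinarith [abs_nonneg t]
  have hu : ‖e‖⁻¹ • e ∈ ((↑) : E → Y) '' sphere 0 1 :=
    ⟨‖e‖⁻¹ • ⟨e, he⟩, by simp [norm_smul, he0], rfl⟩
  obtain ⟨c, hc, hcu⟩ := Set.mem_iUnion₂.1 (hKC hu)
  obtain ⟨w, hw, htw, hcw⟩ : ∃ w : Y, ‖w‖ = 1 ∧ t • z = |t| • w ∧ 2 - η / 2 ≤ ‖c + w‖ := by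
    rcases le_or_gt 0 t with ht | ht
    · refine ⟨z, hz, by rw [abs_of_nonneg ht], ?_⟩
      simpa [← norm_neg (c + z), neg_add_eq_sub] using hfar (-c) (.inr (by simpa using hc))
    · refine ⟨-z, by rw [norm_neg, hz], by rw [abs_of_neg ht, smul_neg, neg_smul, neg_neg], ?_⟩
      simpa [sub_eq_add_neg] using hfar c (.inl hc)
  have huw : 2 - η ≤ ‖‖e‖⁻¹ • e + w‖ := by
    have := norm_sub_norm_le (c + w) (‖e‖⁻¹ • e + w)
    rw [add_sub_add_right_eq_sub, ← dist_eq_norm, dist_comm] at this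
    linarith [mem_ball.1 hcu]
  have hsplit : e + t • z = ‖e‖ • (‖e‖⁻¹ • e) + |t| • w := by
    rw [htw, smul_inv_smul₀ (norm_ne_zero_iff.2 he0)]
  rw [hsplit]
  exact norm_smul_add_smul_ge_of_norm_add_ge (by simp [norm_smul, he0]) hw.le huw hη.le
    (norm_nonneg e) (abs_nonneg t)

theorem IsOctahedral.exists_seq_norm_add_sum_ge (hY : IsOctahedral Y) (s₀ : Finset Y) {δ : ℝ}
    (hδ : 0 < δ) (hδ1 : δ ≤ 1) :
    ∃ y : ℕ → Y, (∀ k, ‖y k‖ = 1) ∧ ∀ x ∈ Submodule.span ℝ (s₀ : Set Y), ∀ (F : Finset ℕ)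
      (b : ℕ → ℝ), (1 - δ) * (‖x‖ + ∑ i ∈ F, |b i|) ≤ ‖x + ∑ i ∈ F, b i • y i‖ := by
  classical
  set η : ℕ → ℝ := fun k => δ / 2 / 2 ^ k
  have hη : ∀ k, 0 < η k := fun k => by positivity
  have hηF : ∀ F : Finset ℕ, ∑ k ∈ F, η k ≤ δ := fun F =>
    (summable_geometric_two' δ).sum_le_tsum F (fun k _ => (hη k).le) |>.trans_eq
      (tsum_geometric_two' δ)
  obtain ⟨y, hy⟩ := exists_seq_forall_union_image_range
    (fun s k z => ‖z‖ = 1 ∧ ∀ e ∈ Submodule.span ℝ (s : Set Y), ∀ t : ℝ,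
      (1 - η k) * (‖e‖ + |t|) ≤ ‖e + t • z‖)
    (fun s k => hY.exists_norm_add_smul_ge _ (hη k)) s₀
  refine ⟨y, fun k => (hy k).1, fun x hx F b => ?_⟩
  suffices key : ∀ F : Finset ℕ, (1 - ∑ k ∈ F, η k) * (‖x‖ + ∑ i ∈ F, |b i|) ≤
      ‖x + ∑ i ∈ F, b i • y i‖ from
    (mul_le_mul_of_nonneg_right (by linarith [hηF F]) (by positivity)).trans (key F)
  intro F
  induction F using Finset.induction_on_max with
  | empty => simp
  | insert m F hlt ih =>
    have hmF : m ∉ F := fun h => lt_irrefl m (hlt m h)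
    have hmem : x + ∑ i ∈ F, b i • y i ∈
        Submodule.span ℝ ((s₀ ∪ (Finset.range m).image y : Finset Y) : Set Y) := by
      refine add_mem (Submodule.span_mono (by simp) hx) (Submodule.sum_mem _ fun i hi => ?_)
      refine Submodule.smul_mem _ _ (Submodule.subset_span ?_)
      simpa using Or.inr ⟨i, hlt i hi, rfl⟩
    have hstep := (hy m).2 _ hmem (b m)
    have hrearrange : x + ∑ i ∈ insert m F, b i • y i = (x + ∑ i ∈ F, b i • y i) + b m • y m := by
      rw [Finset.sum_insert hmF]; abel
    rw [hrearrange, Finset.sum_insert hmF, Finset.sum_insert hmF]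
    have hsum := hηF (insert m F)
    rw [Finset.sum_insert hmF] at hsum
    have hF0 : 0 ≤ ∑ k ∈ F, η k := Finset.sum_nonneg fun k _ => (hη k).le
    have hS : 0 ≤ ‖x‖ + ∑ i ∈ F, |b i| := by positivity
    nlinarith [hη m, abs_nonneg (b m), mul_nonneg (mul_nonneg (hη m).le hF0) hS,
      mul_nonneg hF0 (abs_nonneg (b m))]

lemma exists_sum_abs_eq_one_norm_sum_smul_lt {ι : Type*} {s : ι → Y} {δ : ℝ}
    (h : ¬ ∀ (F : Finset ι) (a : ι → ℝ), δ * ∑ i ∈ F, |a i| ≤ ‖∑ i ∈ F, a i • s i‖) :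
    ∃ (F : Finset ι) (a : ι → ℝ), ∑ i ∈ F, |a i| = 1 ∧ ‖∑ i ∈ F, a i • s i‖ < δ := by
  simp only [not_forall, not_le] at h
  obtain ⟨F, a, ha⟩ := h
  set r := ∑ i ∈ F, |a i|
  have hr : 0 < r := by
    refine (Finset.sum_nonneg fun i _ => abs_nonneg (a i)).lt_of_ne fun hr => ?_
    rw [show r = 0 from hr.symm, mul_zero] at ha
    exact (norm_nonneg _).not_gt ha
  refine ⟨F, fun i => r⁻¹ * a i, ?_, ?_⟩
  · simp_rw [abs_mul, abs_of_pos (inv_pos.2 hr), ← Finset.mul_sum]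
    exact inv_mul_cancel₀ hr.ne'
  · simp_rw [mul_smul, ← Finset.smul_sum, norm_smul, Real.norm_of_nonneg (inv_nonneg.2 hr.le)]
    rwa [inv_mul_lt_iff₀ hr, mul_comm]

lemma norm_inv_norm_smul_self {v : Y} (hv : v ≠ 0) : ‖‖v‖⁻¹ • v‖ = 1 := by
  rw [norm_smul, norm_inv, norm_norm, inv_mul_cancel₀ (norm_ne_zero_iff.2 hv)]

lemma norm_sub_inv_norm_smul_self {v : Y} (hv : v ≠ 0) : ‖v - ‖v‖⁻¹ • v‖ = |‖v‖ - 1| := by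
  have hsplit : v - ‖v‖⁻¹ • v = (‖v‖ - 1) • (‖v‖⁻¹ • v) := by
    rw [sub_smul, one_smul, smul_inv_smul₀ (norm_ne_zero_iff.2 hv)]
  rw [hsplit, norm_smul, norm_inv_norm_smul_self hv, Real.norm_eq_abs, mul_one]

theorem Submodule.exists_norm_eq_one_mem_near (X : Submodule ℝ Y) {w : Y} {δ : ℝ} (hδ : δ ≤ 1 / 4)
    (hw : |‖w‖ - 1| ≤ δ) (hwX : ‖X.mkQ w‖ < δ) : ∃ z ∈ X, ‖z‖ = 1 ∧ ‖w - z‖ ≤ 3 * δ := by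
  obtain ⟨m, hm, hmδ⟩ := Submodule.Quotient.norm_mk_lt (X.mkQ w) (sub_pos.2 hwX)
  have hvX : w - m ∈ X := (Submodule.Quotient.eq X).1 hm.symm
  set v := w - m
  have hwv : ‖w - v‖ < δ := by simpa [v] using hmδ
  have hv : |‖v‖ - 1| < 2 * δ := by
    linarith [abs_norm_sub_norm_le w v, abs_sub_le ‖v‖ ‖w‖ 1, abs_sub_comm ‖v‖ ‖w‖]
  have hv0 : v ≠ 0 := fun h => by
    rw [h, norm_zero, zero_sub, abs_neg, abs_one] at hv
    linarith
  refine ⟨‖v‖⁻¹ • v, X.smul_mem _ hvX, norm_inv_norm_smul_self hv0, ?_⟩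
  calc ‖w - ‖v‖⁻¹ • v‖ ≤ ‖w - v‖ + ‖v - ‖v‖⁻¹ • v‖ := norm_sub_le_norm_sub_add_norm_sub _ _ _
    _ ≤ 3 * δ := by rw [norm_sub_inv_norm_smul_self hv0]; linarith

theorem Submodule.exists_norm_eq_one_mem_far_of_norm_mkQ_lt (X : Submodule ℝ Y)
    {E : Submodule ℝ Y} {y : ℕ → Y} {δ : ℝ} (hδ : δ ≤ 1 / 4) (hy1 : ∀ k, ‖y k‖ = 1)
    (hy : ∀ x ∈ E, ∀ (F : Finset ℕ) (b : ℕ → ℝ),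
      (1 - δ) * (‖x‖ + ∑ i ∈ F, |b i|) ≤ ‖x + ∑ i ∈ F, b i • y i‖)
    {F : Finset ℕ} {c : ℕ → ℝ} (hc : ∑ i ∈ F, |c i| = 1)
    (hcX : ‖X.mkQ (∑ i ∈ F, c i • y i)‖ < δ) :
    ∃ z ∈ X, ‖z‖ = 1 ∧ ∀ x ∈ E, ‖x‖ = 1 → 2 - 5 * δ ≤ ‖x - z‖ := by
  set w := ∑ i ∈ F, c i • y i
  have hw_le : ‖w‖ ≤ 1 := (norm_sum_le _ _).trans (by simp [norm_smul, hy1, hc])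
  have hw_ge : 1 - δ ≤ ‖w‖ := by simpa [hc] using hy 0 E.zero_mem F c
  obtain ⟨z, hzX, hz1, hwz⟩ :=
    X.exists_norm_eq_one_mem_near hδ (abs_sub_le_iff.2 ⟨by linarith, by linarith⟩) hcX
  refine ⟨z, hzX, hz1, fun x hx hx1 => ?_⟩
  have hxw : (1 - δ) * (1 + 1) ≤ ‖x - w‖ := by
    simpa [hx1, hc, w, sub_eq_add_neg, Finset.sum_neg_distrib] using hy x hx F (-c)
  have := norm_sub_le_norm_sub_add_norm_sub x z w
  rw [norm_sub_rev z] at this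
  linarith

end NormedSpace

theorem octahedral_subspace_quotient_no_l1
    (Y : Type*) [NormedAddCommGroup Y] [NormedSpace ℝ Y] [CompleteSpace Y]
    (hY : IsOctahedral Y) (X : Subspace ℝ Y) (hXc : IsClosed (X : Set Y))
    (hq : ∀ W : Subspace ℝ (Y ⧸ X), IsClosed (W : Set (Y ⧸ X)) → ¬ Nonempty (W ≃L[ℝ] lp (fun _ : ℕ => ℝ) 1)) :
    IsOctahedral X := by
  classical
  -- makes `Y ⧸ X` a normed space
  have : IsClosed (X : Set Y) := hXc
  intro ε hε N x hx
  set δ := min ε 1 / 8 with hδdef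
  have hδ : 0 < δ := by positivity
  have hδ1 : δ ≤ 1 / 8 := by linarith [min_le_right ε 1]
  have hδε : 5 * δ ≤ ε := by linarith [min_le_left ε 1]
  obtain ⟨y, hy1, hy⟩ :=
    hY.exists_seq_norm_add_sum_ge (Finset.univ.image fun n => (x n : Y)) hδ (by linarith)
  by_cases hl1 : ∀ (F : Finset ℕ) (c : ℕ → ℝ), δ * ∑ i ∈ F, |c i| ≤ ‖∑ i ∈ F, c i • X.mkQ (y i)‖
  · obtain ⟨W, hW, hWl1⟩ := exists_isClosed_subspace_equiv_lpOne
      (fun i => (Submodule.Quotient.norm_mk_le X (y i)).trans (hy1 i).le) hδ hl1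
    exact (hq W hW hWl1).elim
  obtain ⟨F, c, hc, hcX⟩ := exists_sum_abs_eq_one_norm_sum_smul_lt hl1
  obtain ⟨z, hzX, hz1, hfar⟩ := X.exists_norm_eq_one_mem_far_of_norm_mkQ_lt (by linarith) hy1 hy hc
    (by simpa [map_sum] using hcX)
  refine ⟨⟨z, hzX⟩, hz1, fun n => ?_⟩
  have hxz : ‖x n - ⟨z, hzX⟩‖ = ‖(x n : Y) - z‖ := rfl
  linarith [hfar (x n) (Submodule.subset_span (by simp)) (hx n)]
end

section
/- Every octahedral Banach space has the property that for every ε > 0, every finite dimensional subspace E of Y, there exists y in the unit sphere of Y such that ‖x + λy‖ ≥ (1−ε)(‖x‖ + |λ|) for all x ∈ E and λ ∈ ℝ; consequently every octahedral Banach space contains an isomorphic copy of ℓ₁. -/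
open TopologicalSpace Metric

/-!
Octahedrality applied to a finite `ε/2`-net of the unit sphere of a finite-dimensional subspace
`E` gives a unit vector `z` with `‖w - z‖ ≥ 2 - ε` for every unit `w ∈ E`; since `E = -E`, also
`‖w + z‖ ≥ 2 - ε`, and the triangle inequality turns this into
`‖a • w + b • z‖ ≥ (1 - ε) (a + b)` for `a, b ≥ 0`.
Iterating with errors `δₙ = 2⁻⁽ⁿ⁺²⁾` yields unit vectors `yₙ` with
`‖∑ aᵢ yᵢ‖ ≥ ∏ (1 - δᵢ) ∑ |aᵢ| ≥ ½ ∑ |aᵢ|`, so `a ↦ ∑ aₙ yₙ` embeds `ℓ¹` isomorphically onto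
a closed subspace.
-/

section

open scoped lp

open Finset Submodule

variable {Y : Type*} [NormedAddCommGroup Y] [NormedSpace ℝ Y]

def IsAlmostL1Orthogonal (ε : ℝ) (E : Submodule ℝ Y) (y : Y) : Prop :=
  ∀ x ∈ E, ∀ l : ℝ, (1 - ε) * (‖x‖ + |l|) ≤ ‖x + l • y‖

variable (Y) in
def HasAlmostL1OrthogonalUnits : Prop :=
  ∀ ε : ℝ, 0 < ε → ∀ E : Submodule ℝ Y, FiniteDimensional ℝ E →
    ∃ y : Y, ‖y‖ = 1 ∧ IsAlmostL1Orthogonal ε E y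

theorem le_norm_smul_add_smul_of_le_norm_add {w z : Y} (hw : ‖w‖ = 1) (hz : ‖z‖ = 1) {δ : ℝ}
    (hwz : 2 - δ ≤ ‖w + z‖) {a b : ℝ} (ha : 0 ≤ a) (hb : 0 ≤ b) :
    (1 - δ) * (a + b) ≤ ‖a • w + b • z‖ := by
  wlog hba : b ≤ a generalizing w z a b
  · rw [add_comm a, add_comm (a • w)]
    exact this hz hw (by rwa [add_comm]) hb ha (le_of_not_ge hba)
  have hδ : 0 ≤ δ := by linarith [norm_add_le w z]
  have htri : a * ‖w + z‖ ≤ ‖a • w + b • z‖ + (a - b) :=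
    calc a * ‖w + z‖ = ‖a • (w + z)‖ := (norm_smul_of_nonneg ha _).symm
      _ = ‖(a • w + b • z) + (a - b) • z‖ := by congr 1; module
      _ ≤ ‖a • w + b • z‖ + (a - b) := by
          grw [norm_add_le, norm_smul_of_nonneg (sub_nonneg.2 hba), hz, mul_one]
  nlinarith [mul_le_mul_of_nonneg_left hwz ha, mul_nonneg hb hδ]

namespace IsOctahedral

variable {ε : ℝ}

theorem exists_far_unit_of_finite (hY : IsOctahedral Y) (hε : 0 < ε) {s : Set Y}
    (hs : s.Finite) (hs1 : ∀ y ∈ s, ‖y‖ = 1) : ∃ z : Y, ‖z‖ = 1 ∧ ∀ y ∈ s, 2 - ε ≤ ‖y - z‖ := by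
  obtain ⟨N, f, -, rfl⟩ := hs.fin_param
  obtain ⟨z, hz, hfz⟩ := hY ε hε N f fun n => hs1 _ ⟨n, rfl⟩
  exact ⟨z, hz, Set.forall_mem_range.2 hfz⟩

theorem exists_far_unit_of_isCompact (hY : IsOctahedral Y) (hε : 0 < ε) {K : Set Y}
    (hK : IsCompact K) (hK1 : ∀ y ∈ K, ‖y‖ = 1) :
    ∃ z : Y, ‖z‖ = 1 ∧ ∀ y ∈ K, 2 - ε ≤ ‖y - z‖ := by
  obtain ⟨t, htK, ht, hKt⟩ := hK.finite_cover_balls (half_pos hε)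
  obtain ⟨z, hz, htz⟩ := hY.exists_far_unit_of_finite (half_pos hε) ht fun u hu => hK1 u (htK hu)
  refine ⟨z, hz, fun y hy => ?_⟩
  obtain ⟨u, hu, hyu⟩ := Set.mem_iUnion₂.1 (hKt hy)
  rw [mem_ball, dist_eq_norm'] at hyu
  linarith [htz u hu, norm_sub_le_norm_sub_add_norm_sub u y z]

theorem exists_isAlmostL1Orthogonal (hY : IsOctahedral Y) (hε : 0 < ε) (E : Submodule ℝ Y)
    [FiniteDimensional ℝ E] : ∃ z : Y, ‖z‖ = 1 ∧ IsAlmostL1Orthogonal ε E z := by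
  obtain ⟨z, hz, hfar⟩ := hY.exists_far_unit_of_isCompact hε
    ((isCompact_sphere (0 : E) 1).image continuous_subtype_val)
    (by rintro _ ⟨w, hw, rfl⟩; simpa using hw)
  have hfar' : ∀ w ∈ E, ‖w‖ = 1 → 2 - ε ≤ ‖w + z‖ := fun w hw hw1 => by
    have := hfar (-w) ⟨⟨-w, E.neg_mem hw⟩, by simpa using hw1, rfl⟩
    rwa [← neg_add', norm_neg] at this
  refine ⟨z, hz, fun x hx l => ?_⟩
  rcases eq_or_ne x 0 with rfl | hx0
  · simp only [norm_zero, zero_add, norm_smul, hz, mul_one, Real.norm_eq_abs]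
    nlinarith [abs_nonneg l]
  wlog hl : 0 ≤ l generalizing x l
  · have := this (-x) (E.neg_mem hx) (-l) (neg_ne_zero.2 hx0) (by linarith)
    rwa [norm_neg, abs_neg, neg_smul, ← neg_add, norm_neg] at this
  have hw1 : ‖(‖x‖⁻¹ : ℝ) • x‖ = 1 := norm_smul_inv_norm hx0
  have h := le_norm_smul_add_smul_of_le_norm_add hw1 hz
    (hfar' _ (E.smul_mem _ hx) hw1) (norm_nonneg x) hl
  rw [abs_of_nonneg hl]
  rwa [smul_inv_smul₀ (norm_ne_zero_iff.2 hx0)] at h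

end IsOctahedral

theorem one_sub_sum_le_prod_one_sub {f : ℕ → ℝ} (h0 : ∀ i, 0 ≤ f i) (h1 : ∀ i, f i ≤ 1)
    (n : ℕ) : 1 - ∑ i ∈ range n, f i ≤ ∏ i ∈ range n, (1 - f i) := by
  induction n with
  | zero => simp
  | succ n ih =>
    rw [sum_range_succ, prod_range_succ]
    nlinarith [mul_le_mul_of_nonneg_right ih (sub_nonneg.2 (h1 n)),
      mul_nonneg (sum_nonneg fun i (_ : i ∈ range n) => h0 i) (h0 n)]

theorem half_le_prod_one_sub_pow (n : ℕ) :
    1 / 2 ≤ ∏ i ∈ range n, (1 - (1 / 2 : ℝ) ^ (i + 2)) := by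
  have hgeom : ∑ i ∈ range n, (1 / 2 : ℝ) ^ (i + 2) ≤ 1 / 2 := by
    have := sum_geometric_two_le n
    calc ∑ i ∈ range n, (1 / 2 : ℝ) ^ (i + 2) = 1 / 4 * ∑ i ∈ range n, (1 / 2 : ℝ) ^ i := by
          rw [mul_sum]; congr! 1; ring
      _ ≤ 1 / 2 := by linarith
  refine le_trans ?_ (one_sub_sum_le_prod_one_sub (fun i => by positivity)
    (fun i => pow_le_one₀ (by norm_num) (by norm_num)) n)
  linarith

theorem prod_one_sub_mul_sum_abs_le_norm_sum {y : ℕ → Y} {δ : ℕ → ℝ} (hδ0 : ∀ n, 0 ≤ δ n)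
    (hδ1 : ∀ n, δ n ≤ 1)
    (hy : ∀ n, IsAlmostL1Orthogonal (δ n) (span ℝ (Set.range fun i : Fin n => y i)) (y n))
    (a : ℕ → ℝ) (n : ℕ) :
    (∏ i ∈ range n, (1 - δ i)) * ∑ i ∈ range n, |a i| ≤ ‖∑ i ∈ range n, a i • y i‖ := by
  induction n with
  | zero => simp
  | succ n ih =>
    set P := ∏ i ∈ range n, (1 - δ i)
    set x := ∑ i ∈ range n, a i • y i
    have hx : x ∈ span ℝ (Set.range fun i : Fin n => y i) :=
      sum_mem fun i hi => smul_mem _ _ (subset_span ⟨⟨i, mem_range.1 hi⟩, rfl⟩)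
    have hP1 : P ≤ 1 :=
      prod_le_one (fun i _ => sub_nonneg.2 (hδ1 i)) fun i _ => by linarith [hδ0 i]
    rw [prod_range_succ, sum_range_succ, sum_range_succ]
    calc P * (1 - δ n) * (∑ i ∈ range n, |a i| + |a n|)
        = (1 - δ n) * (P * ∑ i ∈ range n, |a i| + P * |a n|) := by ring
      _ ≤ (1 - δ n) * (‖x‖ + |a n|) := by
          have := sub_nonneg.2 (hδ1 n)
          gcongr
          exact mul_le_of_le_one_left (abs_nonneg _) hP1
      _ ≤ ‖x + a n • y n‖ := hy n x hx (a n)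

namespace HasAlmostL1OrthogonalUnits

variable (hY : HasAlmostL1OrthogonalUnits Y) {δ : ℕ → ℝ} (hδ : ∀ n, 0 < δ n)

noncomputable def seq (n : ℕ) : Y :=
  (hY (δ n) (hδ n) (span ℝ (Set.range fun i : Fin n => seq i))
    (FiniteDimensional.span_of_finite ℝ (Set.finite_range _))).choose

theorem seq_spec (n : ℕ) :
    ‖hY.seq hδ n‖ = 1 ∧
      IsAlmostL1Orthogonal (δ n) (span ℝ (Set.range fun i : Fin n => hY.seq hδ i))
        (hY.seq hδ n) := by
  rw [seq]
  exact (hY (δ n) (hδ n) _ (.span_of_finite ℝ (Set.finite_range _))).choose_spec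

end HasAlmostL1OrthogonalUnits

theorem lp.hasSum_norm_one {ι E : Type*} [NormedAddCommGroup E] (a : ℓ¹(ι, E)) :
    HasSum (fun i => ‖a i‖) ‖a‖ := by
  simpa using lp.hasSum_norm (p := 1) one_pos a

section L1Embedding

variable [CompleteSpace Y] {y : ℕ → Y}

theorem summable_smul_of_norm_le_one (hy : ∀ n, ‖y n‖ ≤ 1) (a : ℓ¹(ℕ, ℝ)) :
    Summable fun n => a n • y n :=
  (lp.hasSum_norm_one a).summable.of_norm_bounded fun n => by
    rw [norm_smul]
    exact mul_le_of_le_one_right (norm_nonneg _) (hy n)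

noncomputable def l1Synthesis (hy : ∀ n, ‖y n‖ ≤ 1) : ℓ¹(ℕ, ℝ) →L[ℝ] Y :=
  LinearMap.mkContinuous
    { toFun a := ∑' n, a n • y n
      map_add' a b := by
        simp only [lp.coeFn_add, Pi.add_apply, add_smul]
        exact (summable_smul_of_norm_le_one hy a).tsum_add (summable_smul_of_norm_le_one hy b)
      map_smul' c a := by
        simp only [lp.coeFn_smul, Pi.smul_apply, smul_eq_mul, mul_smul, RingHom.id_apply]
        exact (summable_smul_of_norm_le_one hy a).tsum_const_smul c }
    1 fun a => by
      rw [one_mul]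
      refine tsum_of_norm_bounded (lp.hasSum_norm_one a) fun n => ?_
      rw [norm_smul]
      exact mul_le_of_le_one_right (norm_nonneg _) (hy n)

theorem hasSum_l1Synthesis (hy : ∀ n, ‖y n‖ ≤ 1) (a : ℓ¹(ℕ, ℝ)) :
    HasSum (fun n => a n • y n) (l1Synthesis hy a) :=
  (summable_smul_of_norm_le_one hy a).hasSum

theorem mul_norm_le_norm_l1Synthesis (hy : ∀ n, ‖y n‖ ≤ 1) {c : ℝ}
    (hc : ∀ (a : ℕ → ℝ) n, c * ∑ i ∈ range n, |a i| ≤ ‖∑ i ∈ range n, a i • y i‖)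
    (a : ℓ¹(ℕ, ℝ)) : c * ‖a‖ ≤ ‖l1Synthesis hy a‖ :=
  le_of_tendsto_of_tendsto' ((lp.hasSum_norm_one a).tendsto_sum_nat.const_mul c)
    (hasSum_l1Synthesis hy a).tendsto_sum_nat.norm fun n => by
      simpa only [Real.norm_eq_abs] using hc a n

theorem exists_isClosed_subspace_equiv_l1_of_le_norm_sum (hy : ∀ n, ‖y n‖ ≤ 1) {c : ℝ}
    (hc0 : 0 < c)
    (hc : ∀ (a : ℕ → ℝ) n, c * ∑ i ∈ range n, |a i| ≤ ‖∑ i ∈ range n, a i • y i‖) :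
    ∃ X : Subspace ℝ Y, IsClosed (X : Set Y) ∧ Nonempty (X ≃L[ℝ] ℓ¹(ℕ, ℝ)) := by
  set T := l1Synthesis hy
  have hT : AntilipschitzWith (Real.toNNReal c⁻¹) T := T.antilipschitz_of_bound fun a => by
    rw [Real.coe_toNNReal _ (inv_nonneg.2 hc0.le), le_inv_mul_iff₀ hc0]
    exact mul_norm_le_norm_l1Synthesis hy hc a
  have hclosed := hT.isClosed_range T.uniformContinuous
  exact ⟨_, hclosed, ⟨(T.equivRange hT.injective hclosed).symm⟩⟩

end L1Embedding

theorem HasAlmostL1OrthogonalUnits.exists_isClosed_subspace_equiv_l1 [CompleteSpace Y]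
    (hY : HasAlmostL1OrthogonalUnits Y) :
    ∃ X : Subspace ℝ Y, IsClosed (X : Set Y) ∧ Nonempty (X ≃L[ℝ] ℓ¹(ℕ, ℝ)) := by
  have hδ : ∀ n, 0 < (1 / 2 : ℝ) ^ (n + 2) := fun n => by positivity
  refine exists_isClosed_subspace_equiv_l1_of_le_norm_sum (fun n => (hY.seq_spec hδ n).1.le)
    one_half_pos fun a n => ?_
  calc 1 / 2 * ∑ i ∈ range n, |a i|
      ≤ (∏ i ∈ range n, (1 - (1 / 2 : ℝ) ^ (i + 2))) * ∑ i ∈ range n, |a i| := by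
        gcongr
        exact half_le_prod_one_sub_pow n
    _ ≤ ‖∑ i ∈ range n, a i • hY.seq hδ i‖ :=
        prod_one_sub_mul_sum_abs_le_norm_sum (fun n => (hδ n).le)
          (fun n => pow_le_one₀ (by norm_num) (by norm_num)) (fun n => (hY.seq_spec hδ n).2) a n

end

theorem octahedral_findim_and_contains_l1
    (Y : Type*) [NormedAddCommGroup Y] [NormedSpace ℝ Y] [CompleteSpace Y]
    (hY : IsOctahedral Y) :
    (∀ ε : ℝ, 0 < ε → ∀ E : Subspace ℝ Y, FiniteDimensional ℝ E →
      ∃ y : Y, ‖y‖ = 1 ∧ ∀ x ∈ E, ∀ l : ℝ, ‖x + l • y‖ ≥ (1 - ε) * (‖x‖ + |l|)) ∧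
    (∃ X : Subspace ℝ Y, IsClosed (X : Set Y) ∧
      Nonempty (X ≃L[ℝ] lp (fun _ : ℕ => ℝ) 1)) := by
  have h : HasAlmostL1OrthogonalUnits Y := fun _ hε E _ => hY.exists_isAlmostL1Orthogonal hε E
  exact ⟨h, h.exists_isClosed_subspace_equiv_l1⟩
end
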